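/- arXiv:2309.02325 — 9 statements merged into one kernel-verified Lean document; each statement's English description precedes it below -/
import Mathlib

section
/- For every positive rational number q, one has ∑_{d : φ(d)/d = q} 1/d ≤ 1, where the sum ranges over all natural numbers d ≥ 1 with φ(d)/d = q. -/
/-!
Since `φ d / d = ∏_{p ∣ d} (1 - 1/p)`, the value `q` determines the set `S` of prime factors of
`d`: the largest prime of `S` divides the denominator `∏_{p ∈ S} p` but none of the factors
`p - 1` of the numerator, so it can be read off and removed. Hence all `d` in the sum have the same
radical `r = ∏_{p ∈ S} p`, and by the Euler product
`∑_{rad d = r} 1/d ≤ (1/r) ∏_{p ∈ S} (1 - 1/p)⁻¹ = ∏_{p ∈ S} 1/(p - 1) ≤ 1`.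
-/

open scoped ENNReal

open Finset

namespace Nat

lemma mem_of_max_mem_of_prod_sub_one_mul_prod_eq {S T : Finset ℕ} (hS : ∀ p ∈ S, p.Prime)
    (hT : ∀ p ∈ T, p.Prime)
    (h : (∏ p ∈ S, (p - 1)) * ∏ p ∈ T, p = (∏ p ∈ T, (p - 1)) * ∏ p ∈ S, p)
    {P : ℕ} (hP : P ∈ S) (hmax : ∀ p ∈ S, p ≤ P) : P ∈ T := by
  have hPprime := hS P hP
  have hdvd : P ∣ (∏ p ∈ S, (p - 1)) * ∏ p ∈ T, p :=
    h ▸ dvd_mul_of_dvd_right (dvd_prod_of_mem _ hP) _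
  rcases hPprime.dvd_mul.mp hdvd with hsub | hprod
  · -- every factor `p - 1` of the left product is positive and smaller than `P`
    obtain ⟨p, hp, hPp⟩ := hPprime.prime.exists_mem_finset_dvd hsub
    have := (hS p hp).two_le
    have := le_of_dvd (by omega) hPp
    have := hmax p hp
    omega
  · obtain ⟨p, hp, hPp⟩ := hPprime.prime.exists_mem_finset_dvd hprod
    rwa [(prime_dvd_prime_iff_eq hPprime (hT p hp)).mp hPp]

theorem eq_of_prod_sub_one_mul_prod_eq {S T : Finset ℕ} (hS : ∀ p ∈ S, p.Prime)
    (hT : ∀ p ∈ T, p.Prime)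
    (h : (∏ p ∈ S, (p - 1)) * ∏ p ∈ T, p = (∏ p ∈ T, (p - 1)) * ∏ p ∈ S, p) : S = T := by
  induction S using Finset.induction_on_max generalizing T with
  | empty =>
    refine (eq_empty_of_forall_notMem fun P hP ↦ ?_).symm
    obtain ⟨Q, hQ, hQmax⟩ := T.exists_max_image id ⟨P, hP⟩
    exact notMem_empty Q (mem_of_max_mem_of_prod_sub_one_mul_prod_eq hT hS h.symm hQ hQmax)
  | insert a s hlt ih =>
    have has : a ∉ s := fun ha ↦ (hlt a ha).false
    have haT : a ∈ T := mem_of_max_mem_of_prod_sub_one_mul_prod_eq hS hT h (mem_insert_self a s)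
      (by simpa using fun p hp ↦ (hlt p hp).le)
    rw [← insert_erase haT, prod_insert has, prod_insert has, prod_insert (notMem_erase a T),
      prod_insert (notMem_erase a T)] at h
    have ha := (hS a (mem_insert_self a s)).two_le
    have h' : (∏ p ∈ s, (p - 1)) * ∏ p ∈ T.erase a, p =
        (∏ p ∈ T.erase a, (p - 1)) * ∏ p ∈ s, p := by
      apply Nat.eq_of_mul_eq_mul_left (mul_pos (by omega) (by omega) : 0 < (a - 1) * a)
      linear_combination h
    rw [ih (fun p hp ↦ hS p (mem_insert_of_mem hp)) (fun p hp ↦ hT p (mem_of_mem_erase hp)) h',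
      insert_erase haT]

theorem primeFactors_eq_of_totient_div_self_eq {d e : ℕ} (hd : 0 < d) (he : 0 < e)
    (h : (φ d : ℚ) / d = φ e / e) : d.primeFactors = e.primeFactors := by
  refine eq_of_prod_sub_one_mul_prod_eq (fun p ↦ prime_of_mem_primeFactors)
    (fun p ↦ prime_of_mem_primeFactors) ?_
  have hcross : φ d * e = φ e * d := by
    rw [div_eq_div_iff (by positivity) (by positivity)] at h
    exact_mod_cast h
  apply Nat.eq_of_mul_eq_mul_left (mul_pos hd he)
  linear_combination (∏ p ∈ d.primeFactors, p) * (∏ p ∈ e.primeFactors, p) * hcross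
    - e * (∏ p ∈ e.primeFactors, p) * totient_mul_prod_primeFactors d
    + d * (∏ p ∈ d.primeFactors, p) * totient_mul_prod_primeFactors e

end Nat

lemma ENNReal.inv_mul_inv_one_sub_inv_le_one {x : ℝ≥0∞} (hx : 2 ≤ x) :
    x⁻¹ * (1 - x⁻¹)⁻¹ ≤ 1 := by
  have htwo : x⁻¹ + x⁻¹ ≤ 1 := by
    rw [← two_mul, ← div_eq_mul_inv]
    exact ENNReal.div_le_of_le_mul (by simpa using hx)
  rw [← div_eq_mul_inv]
  exact ENNReal.div_le_of_le_mul
    (by simpa using ENNReal.le_sub_of_add_le_left (by simp; positivity) htwo)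

namespace Nat

theorem tsum_inv_factoredNumbers {S : Finset ℕ} (hS : ∀ p ∈ S, p.Prime) :
    ∑' m : factoredNumbers S, (m : ℝ≥0∞)⁻¹ = ∏ p ∈ S, (1 - (p : ℝ≥0∞)⁻¹)⁻¹ := by
  induction S using Finset.induction_on with
  | empty =>
    rw [factoredNumbers_empty]
    exact (tsum_singleton 1 fun m : ℕ ↦ (m : ℝ≥0∞)⁻¹).trans (by simp)
  | insert a s has ih =>
    have ha := hS a (mem_insert_self a s)
    have hterm (x : ℕ × factoredNumbers s) :
        ((equivProdNatFactoredNumbers ha has x : ℕ) : ℝ≥0∞)⁻¹ =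
          (a : ℝ≥0∞)⁻¹ ^ x.1 * (x.2 : ℝ≥0∞)⁻¹ := by
      rw [equivProdNatFactoredNumbers_apply' ha has, cast_mul, cast_pow,
        ENNReal.mul_inv (by simp) (by simp), ENNReal.inv_pow]
    rw [← (equivProdNatFactoredNumbers ha has).tsum_eq, prod_insert has]
    simp only [hterm, ENNReal.tsum_prod', ENNReal.tsum_mul_left, ENNReal.tsum_mul_right,
      ENNReal.tsum_geometric, ih fun p hp ↦ hS p (mem_insert_of_mem hp)]

theorem tsum_inv_of_primeFactors_eq_le_one {S : Finset ℕ} (hS : ∀ p ∈ S, p.Prime) :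
    ∑' d : {d : ℕ // 0 < d ∧ d.primeFactors = S}, (d.1 : ℝ≥0∞)⁻¹ ≤ 1 := by
  set r := ∏ p ∈ S, p
  have hr (d : {d : ℕ // 0 < d ∧ d.primeFactors = S}) : r ∣ d.1 := by
    obtain ⟨d, -, rfl⟩ := d
    exact prod_primeFactors_dvd d
  have hquot (d : {d : ℕ // 0 < d ∧ d.primeFactors = S}) : d.1 / r ∈ factoredNumbers S :=
    mem_factoredNumbers_of_dvd (mem_factoredNumbers_of_primeFactors_subset d.2.1.ne' d.2.2.le)
      (div_dvd_of_dvd (hr d))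
  have hinj : Function.Injective fun d : {d : ℕ // 0 < d ∧ d.primeFactors = S} ↦
      (⟨d.1 / r, hquot d⟩ : factoredNumbers S) := fun d e hde ↦
    Subtype.ext <| (Nat.div_left_inj (hr d) (hr e)).mp (congrArg Subtype.val hde)
  calc ∑' d : {d : ℕ // 0 < d ∧ d.primeFactors = S}, (d.1 : ℝ≥0∞)⁻¹
      = (r : ℝ≥0∞)⁻¹ *
          ∑' d : {d : ℕ // 0 < d ∧ d.primeFactors = S}, ((d.1 / r : ℕ) : ℝ≥0∞)⁻¹ := by
        rw [← ENNReal.tsum_mul_left]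
        refine tsum_congr fun d ↦ ?_
        rw [← ENNReal.mul_inv (by simp) (by simp), ← cast_mul, Nat.mul_div_cancel' (hr d)]
    _ ≤ (r : ℝ≥0∞)⁻¹ * ∑' m : factoredNumbers S, (m : ℝ≥0∞)⁻¹ := by
        gcongr
        exact ENNReal.tsum_comp_le_tsum_of_injective hinj fun m ↦ (m.1 : ℝ≥0∞)⁻¹
    _ = ∏ p ∈ S, (p : ℝ≥0∞)⁻¹ * (1 - (p : ℝ≥0∞)⁻¹)⁻¹ := by
        rw [tsum_inv_factoredNumbers hS, prod_mul_distrib, cast_prod,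
          ENNReal.prod_inv_distrib fun _ _ _ _ _ ↦ .inr (ENNReal.natCast_ne_top _)]
    _ ≤ 1 := prod_le_one' fun p hp ↦
        ENNReal.inv_mul_inv_one_sub_inv_le_one (by exact_mod_cast (hS p hp).two_le)

end Nat

theorem stmt2_general (q : ℚ) :
    ∑' d : {d : ℕ // 0 < d ∧ (Nat.totient d : ℚ) / d = q}, (1 : ℝ≥0∞) / (d.1 : ℝ≥0∞) ≤ 1 := by
  rcases isEmpty_or_nonempty {d : ℕ // 0 < d ∧ (Nat.totient d : ℚ) / d = q} with
    _ | ⟨⟨d₀, hd₀, rfl⟩⟩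
  · simp
  calc _ ≤ ∑' d : {d : ℕ // 0 < d ∧ d.primeFactors = d₀.primeFactors}, (d.1 : ℝ≥0∞)⁻¹ := by
        simp only [one_div]
        exact ENNReal.tsum_mono_subtype (fun d : ℕ ↦ (d : ℝ≥0∞)⁻¹)
          fun d ⟨hd, h⟩ ↦ ⟨hd, Nat.primeFactors_eq_of_totient_div_self_eq hd hd₀ h⟩
    _ ≤ 1 := Nat.tsum_inv_of_primeFactors_eq_le_one fun _ ↦ Nat.prime_of_mem_primeFactors

theorem stmt2 (q : ℚ) (hq : 0 < q) :
    ∑' d : {d : ℕ // 0 < d ∧ (Nat.totient d : ℚ) / d = q}, (1 : ℝ≥0∞) / (d.1 : ℝ≥0∞) ≤ 1 :=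
  stmt2_general q
end

section
/- Let q = a/b be a positive rational number in lowest terms. Then the expression ∑_{d : φ(d)/d = q} 1/d (sum over natural numbers d ≥ 1 with φ(d)/d = q) either vanishes, or is equal to ∏_{p ∈ 𝒫} 1/(p−1) for some finite set of primes 𝒫 whose largest element equals the largest prime factor of b (with 𝒫 empty when b = 1). -/
/-!
Since `φ d / d = ∏_{p ∣ d} (1 - 1/p)`, the condition `φ d / d = q` only depends on the set `S`
of prime factors of `d`, and `S` is determined by `q`: in `∏_{p ∈ S} (1 - 1/p) = ∏ (p - 1) / ∏ p`
the largest prime of `S` divides no `p - 1`, so it survives in the reduced denominator, whose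
prime factors all lie in `S`. Thus `max S` is the largest prime factor of the denominator of `q`,
and cancelling it and inducting recovers `S`. So the sum is empty or runs over all `d` with prime
factors exactly `S`, where it splits as the Euler product `∏_{p ∈ S} ∑_{k ≥ 1} p⁻ᵏ = ∏ 1/(p - 1)`.
-/

open scoped ENNReal

theorem Rat.den_natCast_div_dvd (a b : ℕ) : ((a : ℚ) / b).den ∣ b := by
  have h := Rat.den_dvd a b
  rw [Rat.divInt_eq_div] at h
  simp only [Int.cast_natCast] at h
  exact Int.natCast_dvd_natCast.1 h

theorem Nat.Prime.dvd_den_natCast_div {P a b : ℕ} (hP : P.Prime) (hb : b ≠ 0) (hPb : P ∣ b)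
    (hPa : ¬ P ∣ a) : P ∣ ((a : ℚ) / b).den := by
  set r := (a : ℚ) / b
  have hcross : r.num * b = a * r.den := by
    have h := Rat.num_div_den r
    rw [div_eq_div_iff (by exact_mod_cast r.den_nz) (by exact_mod_cast hb)] at h
    exact_mod_cast h
  have hPaden : (P : ℤ) ∣ (a * r.den : ℕ) := by
    push_cast
    exact hcross ▸ (Int.natCast_dvd_natCast.2 hPb).mul_left _
  exact ((Nat.Prime.dvd_mul hP).1 (Int.natCast_dvd_natCast.1 hPaden)).resolve_left hPa

theorem ENNReal.inv_mul_inv_one_sub_inv {x : ℝ≥0∞} (hx0 : x ≠ 0) (hxt : x ≠ ⊤) :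
    x⁻¹ * (1 - x⁻¹)⁻¹ = (x - 1)⁻¹ := by
  rw [← ENNReal.mul_inv (Or.inr (by simp)) (Or.inl hxt), ENNReal.mul_sub (fun _ _ => hxt),
    mul_one, ENNReal.mul_inv_cancel hx0 hxt]

theorem Finset.prod_one_sub_inv_eq_div (S : Finset ℕ) (hS : ∀ p ∈ S, 0 < p) :
    ∏ p ∈ S, (1 - (p : ℚ)⁻¹) = ((∏ p ∈ S, (p - 1) : ℕ) : ℚ) / (∏ p ∈ S, p : ℕ) := by
  rw [Nat.cast_prod, Nat.cast_prod, ← Finset.prod_div_distrib]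
  refine Finset.prod_congr rfl fun p hp => ?_
  have hp0 : (p : ℚ) ≠ 0 := by exact_mod_cast (hS p hp).ne'
  rw [Nat.cast_pred (hS p hp)]
  field_simp

theorem Finset.max_den_prod_one_sub_inv_primeFactors (S : Finset ℕ) (hS : ∀ p ∈ S, p.Prime) :
    (∏ p ∈ S, (1 - (p : ℚ)⁻¹)).den.primeFactors.max = S.max := by
  rw [S.prod_one_sub_inv_eq_div fun p hp => (hS p hp).pos]
  have hprod : ∏ p ∈ S, p ≠ 0 := Finset.prod_ne_zero_iff.2 fun p hp => (hS p hp).ne_zero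
  have hsub := (Nat.primeFactors_mono (Rat.den_natCast_div_dvd (∏ p ∈ S, (p - 1)) _)
    hprod).trans (Nat.primeFactors_prod hS).subset
  refine le_antisymm (Finset.max_mono hsub) ?_
  rcases S.eq_empty_or_nonempty with rfl | hne
  · simp
  set P := S.max' hne
  have hPS : P ∈ S := S.max'_mem hne
  -- each factor `p - 1` lies strictly between `0` and `P`
  have hPndvd : ¬ P ∣ ∏ p ∈ S, (p - 1) := by
    intro h
    obtain ⟨p, hp, hPp⟩ := ((hS P hPS).prime.dvd_finsetProd_iff _).1 h
    have := Nat.le_of_dvd (Nat.sub_pos_of_lt (hS p hp).one_lt) hPp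
    have := S.le_max' p hp
    have := (hS p hp).pos
    omega
  have hPden := (hS P hPS).dvd_den_natCast_div hprod (Finset.dvd_prod_of_mem _ hPS) hPndvd
  rw [← S.coe_max' hne]
  exact Finset.le_max (Nat.mem_primeFactors.2 ⟨hS P hPS, hPden, Rat.den_nz _⟩)

theorem Finset.max_eq_of_prod_one_sub_inv_eq {S T : Finset ℕ} (hS : ∀ p ∈ S, p.Prime)
    (hT : ∀ p ∈ T, p.Prime) (h : ∏ p ∈ S, (1 - (p : ℚ)⁻¹) = ∏ p ∈ T, (1 - (p : ℚ)⁻¹)) :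
    S.max = T.max := by
  rw [← S.max_den_prod_one_sub_inv_primeFactors hS, h,
    T.max_den_prod_one_sub_inv_primeFactors hT]

theorem Finset.prod_one_sub_inv_injOn :
    Set.InjOn (fun S : Finset ℕ => ∏ p ∈ S, (1 - (p : ℚ)⁻¹)) {S | ∀ p ∈ S, p.Prime} := by
  intro S (hS : ∀ p ∈ S, p.Prime) T (hT : ∀ p ∈ T, p.Prime)
    (h : ∏ p ∈ S, (1 - (p : ℚ)⁻¹) = ∏ p ∈ T, (1 - (p : ℚ)⁻¹))
  induction S using Finset.induction_on_max generalizing T with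
  | empty => exact (Finset.max_eq_bot.1 (Finset.max_eq_of_prod_one_sub_inv_eq hS hT h).symm).symm
  | insert a s hlt ih =>
    have ha : a ∈ T := by
      refine Finset.mem_of_max ((Finset.max_eq_of_prod_one_sub_inv_eq hS hT h).symm.trans ?_)
      rw [Finset.max_insert,
        max_eq_left (Finset.max_le fun x hx => WithBot.coe_le_coe.2 (hlt x hx).le)]
    have ha0 : 1 - (a : ℚ)⁻¹ ≠ 0 :=
      sub_ne_zero.2 (inv_ne_one.2 (mod_cast (hS a (Finset.mem_insert_self a s)).ne_one)).symm
    rw [Finset.prod_insert fun has => (hlt a has).false, ← Finset.mul_prod_erase T _ ha] at h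
    rw [ih (fun p hp => hS p (Finset.mem_insert_of_mem hp))
      (fun p hp => hT p (Finset.mem_of_mem_erase hp)) (mul_left_cancel₀ ha0 h),
      Finset.insert_erase ha]

theorem Nat.totient_div_self_eq_prod {n : ℕ} (hn : n ≠ 0) :
    (n.totient : ℚ) / n = ∏ p ∈ n.primeFactors, (1 - (p : ℚ)⁻¹) := by
  rw [Nat.totient_eq_mul_prod_factors, mul_div_cancel_left₀ _ (by exact_mod_cast hn)]

theorem Nat.totient_div_self_eq_iff {m n : ℕ} (hm : m ≠ 0) (hn : n ≠ 0) :
    (m.totient : ℚ) / m = n.totient / n ↔ m.primeFactors = n.primeFactors := by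
  rw [Nat.totient_div_self_eq_prod hm, Nat.totient_div_self_eq_prod hn]
  exact Finset.prod_one_sub_inv_injOn.eq_iff (fun _ => Nat.prime_of_mem_primeFactors)
    (fun _ => Nat.prime_of_mem_primeFactors)

def Nat.withPrimeFactors (S : Finset ℕ) : Set ℕ := {d | d ≠ 0 ∧ d.primeFactors = S}

theorem Nat.withPrimeFactors_empty : Nat.withPrimeFactors ∅ = {1} := by
  ext d
  simp [Nat.withPrimeFactors, Nat.primeFactors_eq_empty]
  omega

def Nat.withPrimeFactorsInsertEquiv {p : ℕ} (hp : p.Prime) {s : Finset ℕ} (hps : p ∉ s) :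
    ℕ × Nat.withPrimeFactors s ≃ Nat.withPrimeFactors (insert p s) where
  toFun x := ⟨p ^ (x.1 + 1) * x.2.1, by
    refine ⟨mul_ne_zero (pow_ne_zero _ hp.ne_zero) x.2.2.1, ?_⟩
    rw [Nat.primeFactors_mul (pow_ne_zero _ hp.ne_zero) x.2.2.1,
      Nat.primeFactors_prime_pow (Nat.succ_ne_zero _) hp, x.2.2.2, ← Finset.insert_eq]⟩
  invFun d := (d.1.factorization p - 1, ⟨ordCompl[p] d.1, by
    refine ⟨(Nat.ordCompl_pos p d.2.1).ne', ?_⟩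
    rw [← Nat.support_factorization, Nat.factorization_ordCompl, Finsupp.support_erase,
      Nat.support_factorization, d.2.2, Finset.erase_insert hps]⟩)
  left_inv := by
    rintro ⟨k, m, hm0, hms⟩
    have hpm : ¬ p ∣ m := fun h => hps (hms ▸ Nat.mem_primeFactors.2 ⟨hp, h, hm0⟩)
    have hfac : (p ^ (k + 1) * m).factorization p = k + 1 := by
      rw [Nat.factorization_mul (pow_ne_zero _ hp.ne_zero) hm0, hp.factorization_pow]
      simp [Nat.factorization_eq_zero_of_not_dvd hpm]
    ext
    · simp [hfac]
    · simp only [hfac]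
      exact Nat.mul_div_cancel_left _ (pow_pos hp.pos _)
  right_inv := by
    rintro ⟨d, hd0, hds⟩
    have hpd : d.factorization p ≠ 0 := (hp.factorization_pos_of_dvd hd0
      (Nat.dvd_of_mem_primeFactors (hds ▸ Finset.mem_insert_self p s))).ne'
    ext
    simp only
    rw [Nat.sub_add_cancel (Nat.one_le_iff_ne_zero.2 hpd)]
    exact Nat.ordProj_mul_ordCompl_eq_self d p

theorem Nat.tsum_inv_withPrimeFactors (S : Finset ℕ) (hS : ∀ p ∈ S, p.Prime) :
    ∑' d : Nat.withPrimeFactors S, (d : ℝ≥0∞)⁻¹ = ∏ p ∈ S, ((p : ℝ≥0∞) - 1)⁻¹ := by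
  induction S using Finset.induction_on with
  | empty =>
    rw [Nat.withPrimeFactors_empty]
    simp
  | @insert p s hps ih =>
    have hp := hS p (Finset.mem_insert_self p s)
    have hp0 : (p : ℝ≥0∞) ≠ 0 := by exact_mod_cast hp.ne_zero
    rw [← (Nat.withPrimeFactorsInsertEquiv hp hps).tsum_eq, ENNReal.tsum_prod']
    calc ∑' (k : ℕ) (m : Nat.withPrimeFactors s),
          ((Nat.withPrimeFactorsInsertEquiv hp hps (k, m) : ℕ) : ℝ≥0∞)⁻¹
        = ∑' (k : ℕ) (m : Nat.withPrimeFactors s), (p : ℝ≥0∞)⁻¹ ^ (k + 1) * (m : ℝ≥0∞)⁻¹ := by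
          refine tsum_congr fun k => tsum_congr fun m => ?_
          simp only [Nat.withPrimeFactorsInsertEquiv, Equiv.coe_fn_mk, Nat.cast_mul, Nat.cast_pow]
          rw [ENNReal.mul_inv (Or.inl (pow_ne_zero _ hp0)) (Or.inl (by simp)), ENNReal.inv_pow]
      _ = (p : ℝ≥0∞)⁻¹ * (1 - (p : ℝ≥0∞)⁻¹)⁻¹ * ∑' m : Nat.withPrimeFactors s, (m : ℝ≥0∞)⁻¹ := by
          simp_rw [ENNReal.tsum_mul_left, ENNReal.tsum_mul_right, ENNReal.tsum_geometric_add_one]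
      _ = ∏ q ∈ insert p s, ((q : ℝ≥0∞) - 1)⁻¹ := by
          rw [ENNReal.inv_mul_inv_one_sub_inv hp0 (by simp), Finset.prod_insert hps,
            ih fun q hq => hS q (Finset.mem_insert_of_mem hq)]

theorem stmt3_general (q : ℚ) :
    (∑' d : {d : ℕ // 0 < d ∧ (Nat.totient d : ℚ) / d = q}, (1 : ℝ≥0∞) / (d.1 : ℝ≥0∞)) = 0 ∨
    ∃ P : Finset ℕ, (∀ p ∈ P, p.Prime) ∧ P.max = q.den.primeFactors.max ∧
      (∑' d : {d : ℕ // 0 < d ∧ (Nat.totient d : ℚ) / d = q}, (1 : ℝ≥0∞) / (d.1 : ℝ≥0∞)) =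
        ∏ p ∈ P, (1 : ℝ≥0∞) / ((p : ℝ≥0∞) - 1) := by
  rcases isEmpty_or_nonempty {d : ℕ // 0 < d ∧ (Nat.totient d : ℚ) / d = q} with
    _ | ⟨d₀, hd₀, rfl⟩
  · exact Or.inl tsum_empty
  have hS : ∀ p ∈ d₀.primeFactors, p.Prime := fun _ => Nat.prime_of_mem_primeFactors
  have hset : {d : ℕ | 0 < d ∧ (Nat.totient d : ℚ) / d = Nat.totient d₀ / d₀} =
      Nat.withPrimeFactors d₀.primeFactors := by
    ext d
    simp only [Nat.withPrimeFactors, Set.mem_ofPred_eq, Nat.pos_iff_ne_zero]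
    exact and_congr_right fun hd => Nat.totient_div_self_eq_iff hd hd₀.ne'
  refine Or.inr ⟨d₀.primeFactors, hS, ?_, ?_⟩
  · rw [Nat.totient_div_self_eq_prod hd₀.ne', Finset.max_den_prod_one_sub_inv_primeFactors _ hS]
  · simp only [one_div]
    exact (tsum_congr_set_coe (fun d : ℕ => (d : ℝ≥0∞)⁻¹) hset).trans
      (Nat.tsum_inv_withPrimeFactors _ hS)

/-- Lemma (Exact formula): for a positive rational `q` (automatically in lowest terms
`q.num / q.den`), the sum `∑_{d : φ(d)/d = q} 1/d` either vanishes, or equals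
`∏_{p ∈ 𝒫} 1/(p-1)` for a finite set of primes `𝒫` whose largest element is the largest
prime factor of `q.den` (with `𝒫` empty when `q.den = 1`); both conditions on the largest
element are expressed by `𝒫.max = q.den.primeFactors.max`. -/
theorem stmt3 (q : ℚ) (hq : 0 < q) :
    (∑' d : {d : ℕ // 0 < d ∧ (Nat.totient d : ℚ) / d = q}, (1 : ℝ≥0∞) / (d.1 : ℝ≥0∞)) = 0 ∨
    ∃ P : Finset ℕ, (∀ p ∈ P, p.Prime) ∧ P.max = q.den.primeFactors.max ∧
      (∑' d : {d : ℕ // 0 < d ∧ (Nat.totient d : ℚ) / d = q}, (1 : ℝ≥0∞) / (d.1 : ℝ≥0∞)) =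
        ∏ p ∈ P, (1 : ℝ≥0∞) / ((p : ℝ≥0∞) - 1) :=
  stmt3_general q
end

section
/- For every positive rational number q with q ≠ 1 and q ≠ 1/2, one has the improved inequality ∑_{d : φ(d)/d = q} 1/d ≤ 1/2, where the sum ranges over all natural numbers d ≥ 1 with φ(d)/d = q. -/
open Finset

lemma mem_of_aux (n : ℕ) (P Q : Finset ℕ) (hP : ∀ p ∈ P, p.Prime) (hQ : ∀ p ∈ Q, p.Prime)
    (hPn : ∀ p ∈ P, p ≤ n) (_hQn : ∀ p ∈ Q, p ≤ n)
    (h : (∏ p ∈ P, (p-1)) * ∏ p ∈ Q, p = (∏ p ∈ Q, (p-1)) * ∏ p ∈ P, p) (hn : n ∈ P) :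
    n ∈ Q := by
  have hnp := hP n hn
  have hdvd : n ∣ (∏ p ∈ P, (p-1)) * ∏ p ∈ Q, p := by
    rw [h]; exact Dvd.dvd.mul_left (Finset.dvd_prod_of_mem _ hn) _
  rcases (Nat.Prime.dvd_mul hnp).mp hdvd with h1 | h2
  · exfalso
    obtain ⟨p, hp, hnd⟩ := hnp.prime.exists_mem_finset_dvd h1
    have hp2 := (hP p hp).two_le
    have hle := hPn p hp
    have := Nat.le_of_dvd (by omega) hnd
    omega
  · obtain ⟨q, hq, hnd⟩ := hnp.prime.exists_mem_finset_dvd h2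
    have := (Nat.prime_dvd_prime_iff_eq hnp (hQ q hq)).mp hnd
    rwa [this]

lemma sets_eq : ∀ n (P Q : Finset ℕ), (∀ p ∈ P, p.Prime) → (∀ p ∈ Q, p.Prime) →
    (∀ p ∈ P, p < n) → (∀ p ∈ Q, p < n) →
    ((∏ p ∈ P, (p-1)) * ∏ p ∈ Q, p = (∏ p ∈ Q, (p-1)) * ∏ p ∈ P, p) → P = Q := by
  intro n
  induction n with
  | zero => intro P Q _ _ hPn hQn _
            have e1 : P = ∅ := Finset.eq_empty_of_forall_notMem (fun p hp => by have := hPn p hp; omega)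
            have e2 : Q = ∅ := Finset.eq_empty_of_forall_notMem (fun p hp => by have := hQn p hp; omega)
            rw [e1, e2]
  | succ n ih =>
    intro P Q hP hQ hPn hQn h
    by_cases hnP : n ∈ P
    · have hnQ : n ∈ Q := mem_of_aux n P Q hP hQ (fun p hp => by have := hPn p hp; omega)
        (fun p hp => by have := hQn p hp; omega) h hnP
      have hprime := hP n hnP
      have hA := Finset.mul_prod_erase P (fun p => p - 1) hnP
      have hB := Finset.mul_prod_erase Q (fun p => p) hnQ
      have hC := Finset.mul_prod_erase Q (fun p => p - 1) hnQ
      have hD := Finset.mul_prod_erase P (fun p => p) hnP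
      rw [← hA, ← hB, ← hC, ← hD] at h
      have h2 : (∏ p ∈ P.erase n, (p-1)) * ∏ p ∈ Q.erase n, p
          = (∏ p ∈ Q.erase n, (p-1)) * ∏ p ∈ P.erase n, p := by
        have hpos : 0 < (n - 1) * n := by have := hprime.two_le; exact Nat.mul_pos (by omega) (by omega)
        apply Nat.eq_of_mul_eq_mul_left hpos
        calc (n - 1) * n * ((∏ p ∈ P.erase n, (p-1)) * ∏ p ∈ Q.erase n, p)
            = ((n-1) * ∏ p ∈ P.erase n, (p-1)) * (n * ∏ p ∈ Q.erase n, p) := by ring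
          _ = ((n-1) * ∏ p ∈ Q.erase n, (p-1)) * (n * ∏ p ∈ P.erase n, p) := h
          _ = (n - 1) * n * ((∏ p ∈ Q.erase n, (p-1)) * ∏ p ∈ P.erase n, p) := by ring
      have := ih (P.erase n) (Q.erase n) (fun p hp => hP p (Finset.mem_of_mem_erase hp))
        (fun p hp => hQ p (Finset.mem_of_mem_erase hp))
        (fun p hp => by have := hPn p (Finset.mem_of_mem_erase hp); have := (Finset.mem_erase.mp hp).1; omega)
        (fun p hp => by have := hQn p (Finset.mem_of_mem_erase hp); have := (Finset.mem_erase.mp hp).1; omega)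
        h2
      rw [← Finset.insert_erase hnP, ← Finset.insert_erase hnQ, this]
    · have hnQ : n ∉ Q := fun hnQ => hnP (mem_of_aux n Q P hQ hP
        (fun p hp => by have := hQn p hp; omega) (fun p hp => by have := hPn p hp; omega) h.symm hnQ)
      exact ih P Q hP hQ
        (fun p hp => by have := hPn p hp; have : p ≠ n := fun e => hnP (e ▸ hp); omega)
        (fun p hp => by have := hQn p hp; have : p ≠ n := fun e => hnQ (e ▸ hp); omega) h

open Finset

lemma primeFactors_eq_of_ratio {a b : ℕ} (ha : a ≠ 0) (hb : b ≠ 0)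
    (h : (a.totient : ℚ) / a = (b.totient : ℚ) / b) : a.primeFactors = b.primeFactors := by
  have ha' : (a : ℚ) ≠ 0 := Nat.cast_ne_zero.mpr ha
  have hb' : (b : ℚ) ≠ 0 := Nat.cast_ne_zero.mpr hb
  have hcross : (a.totient : ℚ) * b = (b.totient : ℚ) * a := by
    field_simp at h; linarith [h]
  have Ta := Nat.totient_mul_prod_primeFactors a
  have Tb := Nat.totient_mul_prod_primeFactors b
  -- cast to ℚ
  have Ta' : (a.totient : ℚ) * (∏ p ∈ a.primeFactors, p : ℕ) = (a : ℚ) * ((∏ p ∈ a.primeFactors, (p-1) : ℕ)) := by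
    exact_mod_cast congrArg (Nat.cast : ℕ → ℚ) Ta
  have Tb' : (b.totient : ℚ) * (∏ p ∈ b.primeFactors, p : ℕ) = (b : ℚ) * ((∏ p ∈ b.primeFactors, (p-1) : ℕ)) := by
    exact_mod_cast congrArg (Nat.cast : ℕ → ℚ) Tb
  set X : ℚ := ((∏ p ∈ a.primeFactors, (p-1) : ℕ) : ℚ) with hX
  set Z : ℚ := ((∏ p ∈ a.primeFactors, p : ℕ) : ℚ) with hZ
  set Y : ℚ := ((∏ p ∈ b.primeFactors, (p-1) : ℕ) : ℚ) with hY
  set W : ℚ := ((∏ p ∈ b.primeFactors, p : ℕ) : ℚ) with hW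
  have key : (a : ℚ) * b * (X * W) = (a : ℚ) * b * (Y * Z) := by
    linear_combination (-(b:ℚ) * W) * Ta' + ((a:ℚ) * Z) * Tb' + (Z * W) * hcross
  have key2 : X * W = Y * Z := by
    have hab : (a : ℚ) * b ≠ 0 := mul_ne_zero ha' hb'
    exact mul_left_cancel₀ hab key
  have keyN : (∏ p ∈ a.primeFactors, (p-1)) * ∏ p ∈ b.primeFactors, p
      = (∏ p ∈ b.primeFactors, (p-1)) * ∏ p ∈ a.primeFactors, p := by
    rw [hX, hY, hZ, hW] at key2
    exact_mod_cast key2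
  exact sets_eq ((a.primeFactors ∪ b.primeFactors).sup id + 1) _ _
    (fun p hp => Nat.prime_of_mem_primeFactors hp)
    (fun p hp => Nat.prime_of_mem_primeFactors hp)
    (fun p hp => Nat.lt_succ_of_le (Finset.le_sup (f := id) (Finset.mem_union_left _ hp)))
    (fun p hp => Nat.lt_succ_of_le (Finset.le_sup (f := id) (Finset.mem_union_right _ hp)))
    keyN

open Finset
open scoped ENNReal

lemma tsum_smooth_le (P : Finset ℕ) (hP : ∀ p ∈ P, p.Prime) :
    ∑' m : ℕ, (if m ≠ 0 ∧ m.primeFactors ⊆ P then ((m : ℝ≥0∞))⁻¹ else 0)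
      ≤ ∏ p ∈ P, (1 - ((p : ℝ≥0∞))⁻¹)⁻¹ := by
  classical
  revert hP
  induction P using Finset.induction_on with
  | empty =>
    intro _
    have : ∑' m : ℕ, (if m ≠ 0 ∧ m.primeFactors ⊆ (∅ : Finset ℕ) then ((m : ℝ≥0∞))⁻¹ else 0) = 1 := by
      rw [tsum_eq_single 1]
      · simp
      · intro m hm
        rcases Nat.eq_zero_or_pos m with h0 | h0
        · simp [h0]
        · rw [if_neg]
          rintro ⟨hm0, hsub⟩
          have : m.primeFactors = ∅ := Finset.subset_empty.mp hsub
          rcases Nat.primeFactors_eq_empty.mp this with h | h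
          · exact hm0 h
          · exact hm h
    rw [this]; simp
  | @insert p s hps ih =>
    intro hP
    have hp : p.Prime := hP p (Finset.mem_insert_self p s)
    have hs : ∀ q ∈ s, q.Prime := fun q hq => hP q (Finset.mem_insert_of_mem hq)
    set F : ℕ × ℕ → ℝ≥0∞ := fun x =>
      ((p : ℝ≥0∞))⁻¹ ^ x.1 * (if x.2 ≠ 0 ∧ x.2.primeFactors ⊆ s then ((x.2 : ℝ≥0∞))⁻¹ else 0) with hF
    set ι : ℕ → ℕ × ℕ := fun m => (m.factorization p, m / p ^ m.factorization p) with hι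
    have hinj : Function.Injective ι := by
      intro a b hab
      have h1 : a.factorization p = b.factorization p := congrArg Prod.fst hab
      have h2 : a / p ^ a.factorization p = b / p ^ b.factorization p := congrArg Prod.snd hab
      rcases Nat.eq_zero_or_pos a with ha | ha
      · rcases Nat.eq_zero_or_pos b with hb | hb
        · rw [ha, hb]
        · exfalso
          have hbne : b / p ^ b.factorization p ≠ 0 := (Nat.ordCompl_pos p hb.ne').ne'
          apply hbne; rw [← h2, ha]; simp
      · rcases Nat.eq_zero_or_pos b with hb | hb
        · exfalso
          have hane : a / p ^ a.factorization p ≠ 0 := (Nat.ordCompl_pos p ha.ne').ne'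
          apply hane; rw [h2, hb]; simp
        · rw [← Nat.ordProj_mul_ordCompl_eq_self a p, ← Nat.ordProj_mul_ordCompl_eq_self b p,
            h2, h1]
    have hpt : ∀ m : ℕ, (if m ≠ 0 ∧ m.primeFactors ⊆ insert p s then ((m : ℝ≥0∞))⁻¹ else 0)
        ≤ F (ι m) := by
      intro m
      by_cases hm : m ≠ 0 ∧ m.primeFactors ⊆ insert p s
      · obtain ⟨hm0, hmsub⟩ := hm
        set e := m.factorization p with he
        set k := m / p ^ e with hk
        have hmk : p ^ e * k = m := Nat.ordProj_mul_ordCompl_eq_self m p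
        have hk0 : k ≠ 0 := (Nat.ordCompl_pos p hm0).ne'
        have hpk : ¬ p ∣ k := Nat.not_dvd_ordCompl hp hm0
        have hksub : k.primeFactors ⊆ s := by
          intro q hq
          have hkdvd : k ∣ m := ⟨p ^ e, by rw [← hmk]; ring⟩
          have hqm : q ∈ m.primeFactors := Nat.primeFactors_mono hkdvd hm0 hq
          rcases Finset.mem_insert.mp (hmsub hqm) with h | h
          · exfalso; exact hpk (h ▸ Nat.dvd_of_mem_primeFactors hq)
          · exact h
        rw [if_pos ⟨hm0, hmsub⟩, hF]
        simp only
        rw [if_pos ⟨hk0, hksub⟩]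
        have : ((m : ℝ≥0∞))⁻¹ = ((p : ℝ≥0∞) ^ e * (k : ℝ≥0∞))⁻¹ := by
          rw [← hmk]; push_cast; ring_nf
        rw [this, ENNReal.mul_inv (Or.inr (ENNReal.natCast_ne_top k))
          (Or.inl (by simp [ENNReal.pow_ne_top, ENNReal.natCast_ne_top]))]
        rw [ENNReal.inv_pow]
      · rw [if_neg hm]; exact zero_le
    calc ∑' m : ℕ, (if m ≠ 0 ∧ m.primeFactors ⊆ insert p s then ((m : ℝ≥0∞))⁻¹ else 0)
        ≤ ∑' m : ℕ, F (ι m) := ENNReal.tsum_le_tsum hpt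
      _ ≤ ∑' x : ℕ × ℕ, F x := ENNReal.tsum_comp_le_tsum_of_injective hinj F
      _ = (∑' e : ℕ, ((p : ℝ≥0∞))⁻¹ ^ e) *
          (∑' k : ℕ, (if k ≠ 0 ∧ k.primeFactors ⊆ s then ((k : ℝ≥0∞))⁻¹ else 0)) := by
          simp only [hF]
          rw [ENNReal.tsum_prod']
          simp_rw [ENNReal.tsum_mul_left]
          rw [ENNReal.tsum_mul_right]
      _ ≤ (1 - ((p : ℝ≥0∞))⁻¹)⁻¹ * ∏ q ∈ s, (1 - ((q : ℝ≥0∞))⁻¹)⁻¹ := by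
          rw [ENNReal.tsum_geometric]
          exact mul_le_mul' le_rfl (ih hs)
      _ = ∏ q ∈ insert p s, (1 - ((q : ℝ≥0∞))⁻¹)⁻¹ := by rw [Finset.prod_insert hps]

open Finset
open scoped BigOperators ENNReal

theorem stmt4 (q : ℚ) (hq : 0 < q) (hq1 : q ≠ 1) (hq2 : q ≠ 1 / 2) :
    ∑' d : {d : ℕ // 0 < d ∧ (Nat.totient d : ℚ) / d = q}, (1 : ℝ≥0∞) / (d.1 : ℝ≥0∞) ≤ 1 / 2 := by
  classical
  by_cases hS : Nonempty {d : ℕ // 0 < d ∧ (Nat.totient d : ℚ) / d = q}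
  swap
  · haveI := not_nonempty_iff.mp hS
    rw [tsum_empty]
    exact zero_le
  obtain ⟨⟨d0, hd0pos, hd0q⟩⟩ := hS
  set P := d0.primeFactors with hPdef
  have hPprime : ∀ p ∈ P, p.Prime := fun p hp => Nat.prime_of_mem_primeFactors hp
  set r := ∏ p ∈ P, p with hrdef
  have hr0 : r ≠ 0 := Finset.prod_ne_zero_iff.mpr (fun p hp => (hPprime p hp).ne_zero)
  have hrtop : (r : ℝ≥0∞) ≠ ⊤ := ENNReal.natCast_ne_top r
  have hrne : (r : ℝ≥0∞) ≠ 0 := Nat.cast_ne_zero.mpr hr0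
  have hsame : ∀ d : {d : ℕ // 0 < d ∧ (Nat.totient d : ℚ) / d = q},
      d.1.primeFactors = P := by
    rintro ⟨d, hd, hdq⟩
    exact primeFactors_eq_of_ratio hd.ne' hd0pos.ne' (hdq.trans hd0q.symm)
  have hrdvd : ∀ d : {d : ℕ // 0 < d ∧ (Nat.totient d : ℚ) / d = q}, r ∣ d.1 := by
    intro d
    rw [hrdef, ← hsame d]
    exact Nat.prod_primeFactors_dvd d.1
  have hrec : ∀ d : {d : ℕ // 0 < d ∧ (Nat.totient d : ℚ) / d = q}, d.1 = r * (d.1 / r) :=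
    fun d => (Nat.mul_div_cancel' (hrdvd d)).symm
  set f : ℕ → ℝ≥0∞ := fun m => if m ≠ 0 ∧ m.primeFactors ⊆ P then ((m : ℝ≥0∞))⁻¹ else 0 with hf
  have hginj : Function.Injective
      (fun d : {d : ℕ // 0 < d ∧ (Nat.totient d : ℚ) / d = q} => d.1 / r) := by
    intro d1 d2 h
    have : d1.1 = d2.1 := by
      rw [hrec d1, hrec d2]; exact congrArg (fun x => r * x) h
    exact Subtype.ext this
  -- the prime p0 ≥ 3 (or contradiction)
  by_cases hp3 : ∃ p ∈ P, 3 ≤ p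
  swap
  · exfalso
    push_neg at hp3
    have hsub : P ⊆ {2} := by
      intro p hp
      have h2 := (hPprime p hp).two_le
      have h3 := hp3 p hp
      simp only [Finset.mem_singleton]; omega
    rcases Finset.subset_singleton_iff.mp hsub with hPe | hP2
    · have hd01 : d0 = 1 := by
        rcases Nat.primeFactors_eq_empty.mp (hPdef ▸ hPe) with h | h
        · omega
        · exact h
      apply hq1
      rw [← hd0q, hd01]; simp
    · have hT := Nat.totient_mul_prod_primeFactors d0
      rw [← hPdef, hP2] at hT
      simp at hT
      -- hT : d0.totient * 2 = d0
      apply hq2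
      rw [← hd0q]
      have hφpos : 0 < d0.totient := Nat.totient_pos.mpr hd0pos
      have hcast : (d0 : ℚ) = d0.totient * 2 := by exact_mod_cast hT.symm
      rw [hcast]
      rw [div_eq_div_iff (by positivity) (by norm_num)]
      ring
  obtain ⟨p0, hp0P, hp03⟩ := hp3
  have halg : (r : ℝ≥0∞)⁻¹ * ∏ p ∈ P, (1 - ((p : ℝ≥0∞))⁻¹)⁻¹
      = ∏ p ∈ P, (((p - 1 : ℕ)) : ℝ≥0∞)⁻¹ := by
    have hfac : ∀ p ∈ P, (1 - ((p : ℝ≥0∞))⁻¹)⁻¹ = (p : ℝ≥0∞) * (((p - 1 : ℕ)) : ℝ≥0∞)⁻¹ := by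
      intro p hp
      have hp2 := (hPprime p hp).two_le
      have hpne : (p : ℝ≥0∞) ≠ 0 := Nat.cast_ne_zero.mpr (by omega)
      have hptop : (p : ℝ≥0∞) ≠ ⊤ := ENNReal.natCast_ne_top p
      have hsub : (1 : ℝ≥0∞) - ((p : ℝ≥0∞))⁻¹ = (((p - 1 : ℕ)) : ℝ≥0∞) / p := by
        apply ENNReal.sub_eq_of_eq_add (ENNReal.inv_ne_top.mpr hpne)
        rw [← one_div, ENNReal.div_add_div_same]
        have hcast : (((p - 1 : ℕ)) : ℝ≥0∞) + 1 = (p : ℝ≥0∞) := by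
          have h' : ((p - 1) + 1 : ℕ) = p := by omega
          exact_mod_cast congrArg (fun n : ℕ => (n : ℝ≥0∞)) h'
        rw [hcast, ENNReal.div_self hpne hptop]
      rw [hsub, ENNReal.inv_div (Or.inl hptop) (Or.inl hpne), div_eq_mul_inv]
    rw [Finset.prod_congr rfl hfac, Finset.prod_mul_distrib]
    have : ∏ p ∈ P, (p : ℝ≥0∞) = (r : ℝ≥0∞) := by rw [hrdef]; push_cast; rfl
    rw [this, ← mul_assoc, ENNReal.inv_mul_cancel hrne hrtop, one_mul]
  calc ∑' d : {d : ℕ // 0 < d ∧ (Nat.totient d : ℚ) / d = q}, (1 : ℝ≥0∞) / (d.1 : ℝ≥0∞)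
      = ∑' d : {d : ℕ // 0 < d ∧ (Nat.totient d : ℚ) / d = q}, (r : ℝ≥0∞)⁻¹ * f (d.1 / r) := by
        apply tsum_congr
        intro d
        have hm0 : d.1 / r ≠ 0 := by
          intro h
          have := hrec d
          rw [h, mul_zero] at this
          exact d.2.1.ne' this
        have hmsub : (d.1 / r).primeFactors ⊆ P := by
          rw [← hsame d]
          exact Nat.primeFactors_mono (Nat.div_dvd_of_dvd (hrdvd d)) d.2.1.ne'
        rw [hf]
        simp only
        rw [if_pos ⟨hm0, hmsub⟩, one_div]
        conv_lhs => rw [hrec d]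
        push_cast
        rw [ENNReal.mul_inv (Or.inr (ENNReal.natCast_ne_top _)) (Or.inl hrtop)]
    _ = (r : ℝ≥0∞)⁻¹ * ∑' d : {d : ℕ // 0 < d ∧ (Nat.totient d : ℚ) / d = q}, f (d.1 / r) :=
        ENNReal.tsum_mul_left
    _ ≤ (r : ℝ≥0∞)⁻¹ * ∑' m : ℕ, f m :=
        mul_le_mul' le_rfl (ENNReal.tsum_comp_le_tsum_of_injective hginj f)
    _ ≤ (r : ℝ≥0∞)⁻¹ * ∏ p ∈ P, (1 - ((p : ℝ≥0∞))⁻¹)⁻¹ :=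
        mul_le_mul' le_rfl (tsum_smooth_le P hPprime)
    _ = ∏ p ∈ P, (((p - 1 : ℕ)) : ℝ≥0∞)⁻¹ := halg
    _ ≤ (((p0 - 1 : ℕ)) : ℝ≥0∞)⁻¹ * 1 := by
        rw [← Finset.mul_prod_erase P _ hp0P]
        apply mul_le_mul' le_rfl
        apply Finset.prod_le_one (fun i _ => zero_le)
        intro p hp
        have hp2 := (hPprime p (Finset.mem_of_mem_erase hp)).two_le
        rw [ENNReal.inv_le_one]
        have h1 : (1 : ℕ) ≤ p - 1 := by omega
        exact_mod_cast h1
    _ ≤ 1 / 2 := by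
        rw [mul_one, one_div]
        apply ENNReal.inv_le_inv'
        have h1 : (2 : ℕ) ≤ p0 - 1 := by omega
        exact_mod_cast h1
end

section
/- There is an absolute constant C > 0 such that for every real y ≥ 10 and every assignment of nonnegative reals a_d to the y-smooth numbers d, one has ∑_{d ∈ ℕ_{≤y}} a_d ≤ C · (log y) · sup_{d ∈ ℕ_{≤y}} ( d^{1 − 1/log y} · a_d ), where both sides are allowed to be infinite. -/
open scoped BigOperators ENNReal NNReal

/-- `d` is a `y`-smooth (positive) natural number: all of its prime factors are at most `y`. -/
def SmoothLe (y : ℝ) (d : ℕ) : Prop :=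
  0 < d ∧ ∀ p : ℕ, p.Prime → p ∣ d → (p : ℝ) ≤ y

section Aux

open Finset Real

lemma aux_log2 {y : ℝ} (hy : 10 ≤ y) : 2 ≤ Real.log y := by
  have h1 := Real.exp_one_lt_d9
  have h2 : Real.exp 2 = Real.exp 1 * Real.exp 1 := by
    rw [← Real.exp_add]; norm_num
  have h : Real.exp 2 ≤ y := by nlinarith [Real.exp_pos 1]
  calc (2:ℝ) = Real.log (Real.exp 2) := (Real.log_exp 2).symm
    _ ≤ Real.log y := Real.log_le_log (Real.exp_pos 2) h

/-- Chebyshev-type bound from `primorial_le_4_pow`. -/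
lemma aux_theta (N : ℕ) : ∑ p ∈ N.primesBelow, Real.log p ≤ N * Real.log 4 := by
  rcases N with _ | n
  · simp [Nat.primesBelow_zero]
  · have h1 : ∑ p ∈ (n+1).primesBelow, Real.log p
        = Real.log (∏ p ∈ (n+1).primesBelow, (p:ℝ)) := by
      rw [Real.log_prod]
      intro p hp
      exact_mod_cast (Nat.prime_of_mem_primesBelow hp).pos.ne'
    have h2 : (∏ p ∈ (n+1).primesBelow, (p:ℝ)) = ((primorial n : ℕ) : ℝ) := by
      rw [primorial, Nat.cast_prod]
      rfl
    have h3 : ((primorial n : ℕ) : ℝ) ≤ ((4:ℕ):ℝ) ^ n := by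
      exact_mod_cast primorial_le_4_pow n
    have h4 : (0:ℝ) < primorial n := by
      have : 0 < primorial n := primorial_pos n
      exact_mod_cast this
    rw [h1, h2]
    calc Real.log (primorial n : ℝ) ≤ Real.log (((4:ℕ):ℝ) ^ n) :=
          Real.log_le_log h4 h3
      _ = n * Real.log 4 := by rw [Real.log_pow]; norm_num
      _ ≤ (n+1 : ℕ) * Real.log 4 := by
          have h4' : (0:ℝ) ≤ Real.log 4 := Real.log_nonneg (by norm_num)
          have : (n:ℝ) ≤ (n+1:ℕ) := by push_cast; linarith
          nlinarith

lemma aux_dyadic (j : ℕ) :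
    ∑ p ∈ ((2^j : ℕ)).primesBelow, Real.log p / p ≤ j * (2 * Real.log 4) := by
  induction j with
  | zero =>
      rw [pow_zero, show Nat.primesBelow 1 = ∅ by decide]
      simp
  | succ j ih =>
      have hsub : ((2^j : ℕ)).primesBelow ⊆ ((2^(j+1) : ℕ)).primesBelow := by
        intro p hp
        rw [Nat.mem_primesBelow] at hp ⊢
        exact ⟨hp.1.trans_le (Nat.pow_le_pow_right (by norm_num) (Nat.le_succ j)), hp.2⟩
      classical
      have hsplit := Finset.sum_sdiff (f := fun p : ℕ => Real.log p / p) hsub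
      have key : ∑ p ∈ ((2^(j+1) : ℕ)).primesBelow \ ((2^j : ℕ)).primesBelow, Real.log p / p
          ≤ 2 * Real.log 4 := by
        have h1 : ∀ p ∈ ((2^(j+1) : ℕ)).primesBelow \ ((2^j : ℕ)).primesBelow,
            Real.log p / p ≤ Real.log p / (2:ℝ)^j := by
          intro p hp
          rw [Finset.mem_sdiff] at hp
          have hpp := Nat.prime_of_mem_primesBelow hp.1
          have hge : 2^j ≤ p := by
            by_contra h
            exact hp.2 (Nat.mem_primesBelow.mpr ⟨Nat.lt_of_not_le h, hpp⟩)
          have hge' : (2:ℝ)^j ≤ (p:ℝ) := by exact_mod_cast hge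
          have hlog : 0 ≤ Real.log p :=
            Real.log_nonneg (by exact_mod_cast hpp.one_lt.le)
          gcongr
        calc ∑ p ∈ ((2^(j+1) : ℕ)).primesBelow \ ((2^j : ℕ)).primesBelow, Real.log p / p
            ≤ ∑ p ∈ ((2^(j+1) : ℕ)).primesBelow \ ((2^j : ℕ)).primesBelow, Real.log p / (2:ℝ)^j :=
              Finset.sum_le_sum h1
          _ = (∑ p ∈ ((2^(j+1) : ℕ)).primesBelow \ ((2^j : ℕ)).primesBelow, Real.log p) / (2:ℝ)^j := by
              rw [Finset.sum_div]
          _ ≤ (∑ p ∈ ((2^(j+1) : ℕ)).primesBelow, Real.log p) / (2:ℝ)^j := by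
              have hnum : (∑ p ∈ ((2^(j+1) : ℕ)).primesBelow \ ((2^j : ℕ)).primesBelow, Real.log p)
                  ≤ ∑ p ∈ ((2^(j+1) : ℕ)).primesBelow, Real.log p := by
                refine Finset.sum_le_sum_of_subset_of_nonneg (Finset.sdiff_subset) ?_
                intro p hp _
                exact Real.log_nonneg
                  (by exact_mod_cast (Nat.prime_of_mem_primesBelow hp).one_lt.le)
              have h2j : (0:ℝ) < (2:ℝ)^j := by positivity
              exact (div_le_div_iff_of_pos_right h2j).mpr hnum
          _ ≤ (((2^(j+1):ℕ):ℝ) * Real.log 4) / (2:ℝ)^j := by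
              have h2j : (0:ℝ) < (2:ℝ)^j := by positivity
              exact (div_le_div_iff_of_pos_right h2j).mpr (aux_theta ((2^(j+1) : ℕ)))
          _ = 2 * Real.log 4 := by
              push_cast
              field_simp
              ring
      push_cast
      linarith

lemma aux_sum_logp {y : ℝ} (hy : 10 ≤ y) :
    ∑ p ∈ (⌊y⌋₊+1).primesBelow, Real.log p / p ≤ 6 * Real.log y := by
  have hy0 : (0:ℝ) ≤ y := by linarith
  have hL2 : (2:ℝ) ≤ Real.log y := aux_log2 hy
  set m := ⌊y⌋₊ with hm
  have hm10 : 10 ≤ m := Nat.le_floor (by exact_mod_cast hy)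
  set k := Nat.log 2 m with hk
  have h1 : m + 1 ≤ 2^(k+1) := Nat.lt_pow_succ_log_self (by norm_num) m
  have hsub : (m+1).primesBelow ⊆ ((2^(k+1) : ℕ)).primesBelow := by
    intro p hp
    rw [Nat.mem_primesBelow] at hp ⊢
    exact ⟨hp.1.trans_le h1, hp.2⟩
  have h2 : ∑ p ∈ (m+1).primesBelow, Real.log p / p
      ≤ ∑ p ∈ ((2^(k+1) : ℕ)).primesBelow, Real.log p / p := by
    refine Finset.sum_le_sum_of_subset_of_nonneg hsub ?_
    intro p hp _
    have hpp := Nat.prime_of_mem_primesBelow hp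
    have : (0:ℝ) ≤ Real.log p := Real.log_nonneg (by exact_mod_cast hpp.one_lt.le)
    positivity
  have h3 := aux_dyadic (k+1)
  -- (k+1 : ℝ) ≤ 2 * log y
  have hpow : ((2:ℝ))^k ≤ y := by
    have := Nat.pow_log_le_self 2 (show m ≠ 0 by omega)
    have h' : ((2^k : ℕ):ℝ) ≤ (m:ℝ) := by exact_mod_cast this
    have h'' : (m:ℝ) ≤ y := Nat.floor_le hy0
    push_cast at h'
    linarith
  have hklog : (k:ℝ) * Real.log 2 ≤ Real.log y := by
    have := Real.log_le_log (by positivity) hpow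
    rwa [Real.log_pow] at this
  have hlog2 : (0.6931471803:ℝ) < Real.log 2 := Real.log_two_gt_d9
  have hkbound : (k:ℝ) ≤ 1.5 * Real.log y := by nlinarith [Nat.cast_nonneg (α := ℝ) k]
  have hjbound : ((k:ℝ)+1) ≤ 2 * Real.log y := by linarith
  have hlog4 : Real.log 4 ≤ 1.3863 := by
    have : (4:ℝ) = 2^2 := by norm_num
    rw [this, Real.log_pow]
    have := Real.log_two_lt_d9
    push_cast
    nlinarith
  have hlog4' : (0:ℝ) ≤ Real.log 4 := Real.log_nonneg (by norm_num)
  calc ∑ p ∈ (m+1).primesBelow, Real.log p / p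
      ≤ ((k+1:ℕ):ℝ) * (2 * Real.log 4) := h2.trans h3
    _ ≤ (2 * Real.log y) * (2 * Real.log 4) := by
        push_cast
        nlinarith
    _ ≤ 6 * Real.log y := by nlinarith

/-- zeta-function bound: `∑ n^{-(1+δ)} ≤ 1 + 1/δ`. -/
lemma aux_zeta {δ : ℝ} (hδ : 0 < δ) :
    ∑' n : ℕ, (n:ℝ) ^ (-(1+δ)) ≤ 1 + 1/δ := by
  have hsum : Summable (fun n : ℕ => (n:ℝ) ^ (-(1+δ))) :=
    Real.summable_nat_rpow.mpr (by linarith)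
  refine hsum.tsum_le_of_sum_range_le ?_
  intro n
  set f : ℕ → ℝ := fun n => (n:ℝ) ^ (-(1+δ)) with hf
  have hnonneg : ∀ i, 0 ≤ f i := fun i => Real.rpow_nonneg (Nat.cast_nonneg i) _
  -- key pointwise bound
  have key : ∀ a : ℝ, 1 ≤ a →
      (a+1) ^ (-(1+δ)) ≤ (a ^ (-δ) - (a+1) ^ (-δ)) / δ := by
    intro a ha
    have ha0 : (0:ℝ) < a := by linarith
    have hb0 : (0:ℝ) < a + 1 := by linarith
    have hlog : 1/(a+1) ≤ Real.log ((a+1)/a) := by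
      have h1 := Real.log_le_sub_one_of_pos (show (0:ℝ) < a/(a+1) by positivity)
      have h2 : Real.log ((a+1)/a) = - Real.log (a/(a+1)) := by
        rw [← Real.log_inv]
        congr 1
        field_simp
      rw [h2]
      have : a/(a+1) - 1 = -(1/(a+1)) := by field_simp; ring
      linarith [h1, this.le]
    have hratio : 1 + δ/(a+1) ≤ ((a+1)/a) ^ δ := by
      have h1 : ((a+1)/a) ^ δ = Real.exp (Real.log ((a+1)/a) * δ) :=
        Real.rpow_def_of_pos (by positivity) δ
      have h2 : δ/(a+1) ≤ Real.log ((a+1)/a) * δ := by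
        rw [div_eq_mul_one_div δ (a+1), mul_comm]
        exact mul_le_mul_of_nonneg_right hlog hδ.le
      have h3 := Real.add_one_le_exp (Real.log ((a+1)/a) * δ)
      rw [h1]
      linarith
    have hA : (0:ℝ) < a ^ δ := Real.rpow_pos_of_pos ha0 δ
    have hB : (0:ℝ) < (a+1) ^ δ := Real.rpow_pos_of_pos hb0 δ
    have hdiv : ((a+1)/a) ^ δ = (a+1)^δ / a^δ := Real.div_rpow hb0.le ha0.le δ
    have hBA : (1 + δ/(a+1)) * a^δ ≤ (a+1)^δ := by
      rw [hdiv] at hratio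
      calc (1 + δ/(a+1)) * a^δ ≤ ((a+1)^δ / a^δ) * a^δ := by
            exact mul_le_mul_of_nonneg_right hratio hA.le
        _ = (a+1)^δ := by field_simp
    have e1 : a ^ (-δ) = (a^δ)⁻¹ := Real.rpow_neg ha0.le δ
    have e2 : (a+1) ^ (-δ) = ((a+1)^δ)⁻¹ := Real.rpow_neg hb0.le δ
    have e3 : (a+1) ^ (-(1+δ)) = ((a+1)^δ)⁻¹ * (a+1)⁻¹ := by
      rw [show -(1+δ) = -δ + (-1) by ring, Real.rpow_add hb0, e2, Real.rpow_neg_one]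
    rw [e1, e2, e3, le_div_iff₀ hδ,
      inv_sub_inv (ne_of_gt hA) (ne_of_gt hB),
      le_div_iff₀ (by positivity : (0:ℝ) < a^δ * (a+1)^δ)]
    have hq : ((a+1)^δ)⁻¹ * (a+1)⁻¹ * δ * (a^δ * (a+1)^δ) = δ * a^δ / (a+1) := by
      field_simp
    rw [hq]
    have hexp : (1 + δ/(a+1)) * a^δ = a^δ + δ * a^δ/(a+1) := by ring
    rw [hexp] at hBA
    linarith
  -- partial sums
  have hmono : ∑ i ∈ Finset.range n, f i ≤ ∑ i ∈ Finset.range (n+2), f i := by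
    refine Finset.sum_le_sum_of_subset_of_nonneg
      (Finset.range_subset_range.mpr (by omega)) (fun i _ _ => hnonneg i)
  refine hmono.trans ?_
  have hsplit : ∑ i ∈ Finset.range (n+2), f i
      = (∑ i ∈ Finset.range n, f (i+2)) + f 1 + f 0 := by
    rw [Finset.sum_range_succ' f (n+1), Finset.sum_range_succ' (fun i => f (i+1)) n]
  have hf0 : f 0 = 0 := by
    simp only [hf, Nat.cast_zero]
    exact Real.zero_rpow (ne_of_lt (by linarith))
  have hf1 : f 1 = 1 := by
    simp only [hf, Nat.cast_one]
    exact Real.one_rpow _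
  set g : ℕ → ℝ := fun k => ((k+1:ℕ):ℝ) ^ (-δ) with hg
  have htel : ∑ k ∈ Finset.range n, (g k - g (k+1)) = g 0 - g n :=
    Finset.sum_range_sub' g n
  have hterm : ∀ k ∈ Finset.range n, f (k+2) ≤ (g k - g (k+1)) / δ := by
    intro k _
    have h := key ((k:ℝ)+1) (by push_cast; linarith [Nat.cast_nonneg (α := ℝ) k])
    have e1 : ((k:ℝ)+1) + 1 = ((k+2:ℕ):ℝ) := by push_cast; ring
    have e2 : ((k:ℝ)+1) = ((k+1:ℕ):ℝ) := by push_cast; ring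
    simp only [hf, hg]
    rw [← e1, ← e2]
    convert h using 3 <;> rw [e1]
  have hsum2 : ∑ k ∈ Finset.range n, f (k+2) ≤ (g 0 - g n)/δ := by
    calc ∑ k ∈ Finset.range n, f (k+2) ≤ ∑ k ∈ Finset.range n, (g k - g (k+1))/δ :=
          Finset.sum_le_sum hterm
      _ = (∑ k ∈ Finset.range n, (g k - g (k+1)))/δ := by rw [Finset.sum_div]
      _ = (g 0 - g n)/δ := by rw [htel]
  have hg0 : g 0 = 1 := by
    simp only [hg]
    norm_num
  have hgn : 0 ≤ g n := Real.rpow_nonneg (Nat.cast_nonneg _) _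
  have : (g 0 - g n)/δ ≤ 1/δ := by
    rw [hg0]
    gcongr
    linarith
  rw [hsplit, hf0, hf1]
  linarith [hsum2.trans this]

end Aux

section Euler

open Real

/-- `n ↦ (n : ℝ) ^ r` as a monoid homomorphism. -/
noncomputable def rpowHom (r : ℝ) : ℕ →* ℝ where
  toFun n := (n:ℝ) ^ r
  map_one' := by simp
  map_mul' m n := by
    push_cast
    exact Real.mul_rpow (Nat.cast_nonneg m) (Nat.cast_nonneg n)

lemma rpowHom_summable_hasSum {r : ℝ} (hr : r < 0) (N : ℕ) :
    Summable (fun m : N.smoothNumbers => ((m:ℕ):ℝ) ^ r) ∧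
      HasSum (fun m : N.smoothNumbers => ((m:ℕ):ℝ) ^ r)
        (∏ p ∈ N.primesBelow, (1 - (p:ℝ) ^ r)⁻¹) := by
  have h : ∀ {p : ℕ}, p.Prime → ‖rpowHom r p‖ < 1 := by
    intro p hp
    have h1 : (1:ℝ) < p := by exact_mod_cast hp.one_lt
    have h2 : (0:ℝ) ≤ (p:ℝ) ^ r := Real.rpow_nonneg (by positivity) r
    simp only [rpowHom, MonoidHom.coe_mk, OneHom.coe_mk]
    rw [Real.norm_eq_abs, abs_of_nonneg h2]
    exact Real.rpow_lt_one_of_one_lt_of_neg h1 hr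
  have H := EulerProduct.summable_and_hasSum_smoothNumbers_prod_primesBelow_geometric h N
  constructor
  · exact H.1.of_norm
  · exact H.2

end Euler

section Main

open Real

set_option maxHeartbeats 1000000 in
lemma aux_factor {y : ℝ} (hy : 10 ≤ y) {p : ℕ} (hp : p.Prime) (hpy : (p:ℝ) ≤ y) :
    (1 - (p:ℝ) ^ (-(1 - 1/Real.log y)))⁻¹ ≤
      Real.exp (24 * Real.log p / (p * Real.log y)) *
        (1 - (p:ℝ) ^ (-(1 + 1/Real.log y)))⁻¹ := by
  have hL : (2:ℝ) ≤ Real.log y := aux_log2 hy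
  have hL0 : (0:ℝ) < Real.log y := by linarith
  have hp1 : (1:ℝ) < p := by exact_mod_cast hp.one_lt
  have hp2 : (2:ℝ) ≤ p := by exact_mod_cast hp.two_le
  have hp0 : (0:ℝ) < p := by linarith
  set L := Real.log y with hLdef
  set t := Real.log p / L with ht
  have hlogp : (0:ℝ) < Real.log p := Real.log_pos hp1
  have ht0 : 0 < t := by positivity
  have ht1 : t ≤ 1 := by
    rw [ht, div_le_one hL0]
    exact Real.log_le_log hp0 hpy
  set X := (p:ℝ) ^ (-(1 - 1/L)) with hX
  set Z := (p:ℝ) ^ (-(1 + 1/L)) with hZ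
  have hXval : X = Real.exp t / p := by
    rw [hX, Real.rpow_def_of_pos hp0]
    rw [show Real.exp t / (p:ℝ) = Real.exp (t - Real.log p) by
      rw [Real.exp_sub, Real.exp_log hp0]]
    congr 1
    rw [ht]
    field_simp
    ring
  have hZval : Z = Real.exp (-t) / p := by
    rw [hZ, Real.rpow_def_of_pos hp0]
    rw [show Real.exp (-t) / (p:ℝ) = Real.exp (-t - Real.log p) by
      rw [Real.exp_sub, Real.exp_log hp0]]
    congr 1
    rw [ht]
    field_simp
    ring
  -- exp t ≤ sqrt p
  have harg : 24 * Real.log p / ((p:ℝ) * L) = 24 * t / p := by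
    rw [ht]
    field_simp
  clear_value X Z t L
  have hexpt : Real.exp t ≤ Real.sqrt p := by
    have h1 : t ≤ Real.log p / 2 := by
      rw [ht]
      gcongr
    have h2 : Real.sqrt (p:ℝ) = Real.exp (Real.log p / 2) := by
      rw [Real.sqrt_eq_rpow, Real.rpow_def_of_pos hp0]
      congr 1
      ring
    rw [h2]
    exact Real.exp_le_exp.mpr h1
  have hsq2 : (4:ℝ)/3 ≤ Real.sqrt 2 := by
    nlinarith [Real.sq_sqrt (show (0:ℝ) ≤ 2 by norm_num), Real.sqrt_nonneg 2]
  have hsqrt2 : (4:ℝ)/3 ≤ Real.sqrt p :=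
    hsq2.trans (Real.sqrt_le_sqrt hp2)
  have hsqp : Real.sqrt p * Real.sqrt p = p := Real.mul_self_sqrt hp0.le
  have hsqpos : (0:ℝ) < Real.sqrt p := by nlinarith
  have hX34 : X ≤ 3/4 := by
    rw [hXval, div_le_iff₀ hp0]
    calc Real.exp t ≤ Real.sqrt p := hexpt
      _ ≤ 3/4 * p := by nlinarith
  have hXpos : 0 < X := by rw [hXval]; positivity
  have hZpos : 0 < Z := by rw [hZval]; positivity
  have hZX : Z ≤ X := by
    rw [hXval, hZval]
    gcongr
    linarith
  have h1Xpos : (0:ℝ) < 1 - X := by linarith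
  have h1Zpos : (0:ℝ) < 1 - Z := by linarith
  -- X - Z ≤ 6 t / p
  have hdiff : X - Z ≤ 6 * t / p := by
    have e3 : Real.exp 1 ≤ 3 := by
      have := Real.exp_one_lt_d9
      linarith
    have het : Real.exp t ≤ 3 := (Real.exp_le_exp.mpr ht1).trans e3
    have hexp2t : 1 - Real.exp (-(2*t)) ≤ 2*t := by
      have := Real.add_one_le_exp (-(2*t))
      linarith
    have hid : Real.exp t - Real.exp (-t) = Real.exp t * (1 - Real.exp (-(2*t))) := by
      rw [mul_sub, mul_one, ← Real.exp_add]
      ring_nf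
    have h0 : 0 ≤ 1 - Real.exp (-(2*t)) := by
      have : Real.exp (-(2*t)) ≤ 1 := Real.exp_le_one_iff.mpr (by linarith)
      linarith
    have hnum : Real.exp t - Real.exp (-t) ≤ 6 * t := by
      rw [hid]
      nlinarith [Real.exp_pos t]
    rw [hXval, hZval, div_sub_div_same]
    exact (div_le_div_iff_of_pos_right hp0).mpr hnum
  have hXZ0 : 0 ≤ X - Z := by linarith
  have h4 : (X - Z)/(1 - X) ≤ 24 * t / p := by
    have hq : (X - Z)/(1 - X) ≤ 4 * (X - Z) := by
      rw [div_le_iff₀ h1Xpos]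
      nlinarith [mul_nonneg hXZ0 (show (0:ℝ) ≤ 3 - 4*X by linarith)]
    have hq2 : 4 * (X - Z) ≤ 24 * t / p := by
      rw [show (24:ℝ) * t / p = 4 * (6 * t / p) by ring]
      linarith
    linarith
  have hratio : (1 - Z)/(1 - X) ≤ Real.exp (24 * t / p) := by
    have h1 : (1 - Z)/(1 - X) = 1 + (X - Z)/(1 - X) := by
      field_simp
      ring
    have h3 := Real.add_one_le_exp (24 * t / p)
    linarith
  rw [harg]
  rw [inv_eq_one_div, inv_eq_one_div, mul_one_div, div_le_div_iff₀ h1Xpos h1Zpos]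
  rw [div_le_iff₀ h1Xpos] at hratio
  linarith

set_option maxHeartbeats 1000000 in
lemma aux_main {y : ℝ} (hy : 10 ≤ y) :
    ∑' m : ((⌊y⌋₊+1).smoothNumbers), ((m:ℕ):ℝ) ^ (-(1 - 1/Real.log y))
      ≤ (2 * Real.exp 150) * Real.log y := by
  have hL : (2:ℝ) ≤ Real.log y := aux_log2 hy
  have hL0 : (0:ℝ) < Real.log y := by linarith
  set L := Real.log y with hLdef
  set N := ⌊y⌋₊ + 1 with hN
  have hs_neg : -(1 - 1/L) < 0 := by
    have : 1/L ≤ 1/2 := by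
      rw [div_le_div_iff₀ hL0 (by norm_num)]
      linarith
    linarith
  have hσ_neg : -(1 + 1/L) < 0 := by
    have : 0 < 1/L := by positivity
    linarith
  obtain ⟨hsum_s, hhas_s⟩ := rpowHom_summable_hasSum hs_neg N
  obtain ⟨hsum_σ, hhas_σ⟩ := rpowHom_summable_hasSum hσ_neg N
  rw [hhas_s.tsum_eq]
  -- bound the σ-product by the zeta bound
  have hPσ : ∏ p ∈ N.primesBelow, (1 - (p:ℝ) ^ (-(1 + 1/L)))⁻¹ ≤ 1 + L := by
    rw [← hhas_σ.tsum_eq]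
    have hfull : Summable (fun n : ℕ => (n:ℝ) ^ (-(1 + 1/L))) :=
      Real.summable_nat_rpow.mpr (by linarith [show (0:ℝ) < 1/L by positivity])
    have hsub : ∑' m : N.smoothNumbers, ((m:ℕ):ℝ) ^ (-(1 + 1/L))
        ≤ ∑' n : ℕ, (n:ℝ) ^ (-(1 + 1/L)) :=
      Summable.tsum_subtype_le (fun n : ℕ => (n:ℝ) ^ (-(1 + 1/L))) _
        (fun n => Real.rpow_nonneg (Nat.cast_nonneg n) _) hfull
    have hzeta := aux_zeta (show (0:ℝ) < 1/L by positivity)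
    have hinv : 1 + 1/(1/L) = 1 + L := by
      rw [one_div_one_div]
    calc ∑' m : N.smoothNumbers, ((m:ℕ):ℝ) ^ (-(1 + 1/L))
        ≤ ∑' n : ℕ, (n:ℝ) ^ (-(1 + 1/L)) := hsub
      _ ≤ 1 + 1/(1/L) := hzeta
      _ = 1 + L := hinv
  -- compare the two products
  have hfac : ∀ p ∈ N.primesBelow,
      (1 - (p:ℝ) ^ (-(1 - 1/L)))⁻¹ ≤
        Real.exp (24 * Real.log p / (p * L)) * (1 - (p:ℝ) ^ (-(1 + 1/L)))⁻¹ := by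
    intro p hp
    have hpp := Nat.prime_of_mem_primesBelow hp
    have hplt := Nat.lt_of_mem_primesBelow hp
    have hpy : (p:ℝ) ≤ y := by
      have h1 : p ≤ ⌊y⌋₊ := by omega
      have h2 : (p:ℝ) ≤ (⌊y⌋₊:ℝ) := by exact_mod_cast h1
      exact h2.trans (Nat.floor_le (by linarith))
    exact aux_factor hy hpp hpy
  have hfacpos : ∀ p ∈ N.primesBelow, (0:ℝ) ≤ (1 - (p:ℝ) ^ (-(1 - 1/L)))⁻¹ := by
    intro p hp
    have hpp := Nat.prime_of_mem_primesBelow hp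
    have hp1 : (1:ℝ) < p := by exact_mod_cast hpp.one_lt
    have : (p:ℝ) ^ (-(1 - 1/L)) < 1 :=
      Real.rpow_lt_one_of_one_lt_of_neg hp1 hs_neg
    have : (0:ℝ) < 1 - (p:ℝ) ^ (-(1 - 1/L)) := by linarith
    positivity
  have hprod : ∏ p ∈ N.primesBelow, (1 - (p:ℝ) ^ (-(1 - 1/L)))⁻¹
      ≤ ∏ p ∈ N.primesBelow,
          (Real.exp (24 * Real.log p / (p * L)) * (1 - (p:ℝ) ^ (-(1 + 1/L)))⁻¹) :=
    Finset.prod_le_prod hfacpos hfac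
  rw [Finset.prod_mul_distrib, ← Real.exp_sum] at hprod
  -- bound the exponential factor
  have hsumexp : ∑ p ∈ N.primesBelow, 24 * Real.log p / (p * L) ≤ 144 := by
    have h1 : ∀ p ∈ N.primesBelow, 24 * Real.log p / ((p:ℝ) * L)
        = (24/L) * (Real.log p / p) := by
      intro p hp
      rw [div_mul_div_comm, mul_comm L (p:ℝ)]
    rw [Finset.sum_congr rfl h1, ← Finset.mul_sum]
    have h2 := aux_sum_logp hy
    have h3 : (0:ℝ) ≤ ∑ p ∈ N.primesBelow, Real.log p / p := by
      refine Finset.sum_nonneg ?_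
      intro p hp
      have hpp := Nat.prime_of_mem_primesBelow hp
      have : (0:ℝ) ≤ Real.log p := Real.log_nonneg (by exact_mod_cast hpp.one_lt.le)
      positivity
    calc (24/L) * ∑ p ∈ N.primesBelow, Real.log p / p
        ≤ (24/L) * (6 * L) := by
          refine mul_le_mul_of_nonneg_left ?_ (by positivity)
          exact h2
      _ = 144 := by
          have hLne : L ≠ 0 := ne_of_gt hL0
          field_simp
          ring
  have hProdσ_nonneg : (0:ℝ) ≤ ∏ p ∈ N.primesBelow, (1 - (p:ℝ) ^ (-(1 + 1/L)))⁻¹ := by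
    refine Finset.prod_nonneg ?_
    intro p hp
    have hpp := Nat.prime_of_mem_primesBelow hp
    have hp1 : (1:ℝ) < p := by exact_mod_cast hpp.one_lt
    have : (p:ℝ) ^ (-(1 + 1/L)) < 1 :=
      Real.rpow_lt_one_of_one_lt_of_neg hp1 hσ_neg
    have : (0:ℝ) < 1 - (p:ℝ) ^ (-(1 + 1/L)) := by linarith
    positivity
  have hexp_le : Real.exp (∑ p ∈ N.primesBelow, 24 * Real.log p / (p * L))
      ≤ Real.exp 150 := Real.exp_le_exp.mpr (by linarith)
  calc ∏ p ∈ N.primesBelow, (1 - (p:ℝ) ^ (-(1 - 1/L)))⁻¹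
      ≤ Real.exp (∑ p ∈ N.primesBelow, 24 * Real.log p / (p * L)) *
          ∏ p ∈ N.primesBelow, (1 - (p:ℝ) ^ (-(1 + 1/L)))⁻¹ := hprod
    _ ≤ Real.exp 150 * (1 + L) := by
        refine mul_le_mul hexp_le hPσ hProdσ_nonneg (Real.exp_pos 150).le
    _ ≤ (2 * Real.exp 150) * L := by
        have : 1 + L ≤ 2 * L := by linarith
        nlinarith [Real.exp_pos 150]


end Main

theorem stmt5 : ∃ C : ℝ, 0 < C ∧ ∀ y : ℝ, 10 ≤ y → ∀ a : ℕ → ℝ≥0,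
    ∑' d : {d : ℕ // SmoothLe y d}, (a d.1 : ℝ≥0∞) ≤
      ENNReal.ofReal (C * Real.log y) *
        ⨆ d : {d : ℕ // SmoothLe y d},
          (d.1 : ℝ≥0∞) ^ ((1 : ℝ) - 1 / Real.log y) * (a d.1 : ℝ≥0∞) := by
  refine ⟨2 * Real.exp 150, by positivity, ?_⟩
  intro y hy a
  have hy0 : (0:ℝ) ≤ y := by linarith
  set s : ℝ := (1 : ℝ) - 1 / Real.log y with hs
  set N : ℕ := ⌊y⌋₊ + 1 with hN
  have hiff : ∀ d : ℕ, SmoothLe y d ↔ d ∈ N.smoothNumbers := by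
    intro d
    rw [Nat.mem_smoothNumbers']
    constructor
    · rintro ⟨hd0, hd⟩ p hp hpd
      have h1 : (p:ℝ) ≤ y := hd p hp hpd
      have h2 : p ≤ ⌊y⌋₊ := Nat.le_floor h1
      omega
    · intro h
      constructor
      · rcases Nat.eq_zero_or_pos d with h0 | h0
        · exfalso
          obtain ⟨p, hpN, hpp⟩ := Nat.exists_infinite_primes N
          have := h p hpp (by rw [h0]; exact dvd_zero p)
          omega
        · exact h0
      · intro p hp hpd
        have h1 : p < N := h p hp hpd
        have h2 : p ≤ ⌊y⌋₊ := by omega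
        calc (p:ℝ) ≤ (⌊y⌋₊:ℝ) := by exact_mod_cast h2
          _ ≤ y := Nat.floor_le hy0
  set S := ⨆ d : {d : ℕ // SmoothLe y d},
      (d.1 : ℝ≥0∞) ^ ((1 : ℝ) - 1 / Real.log y) * (a d.1 : ℝ≥0∞) with hS
  have step1 : ∀ d : {d : ℕ // SmoothLe y d},
      (a d.1 : ℝ≥0∞) ≤ (d.1 : ℝ≥0∞) ^ (-s) * S := by
    intro d
    have hd0 : (d.1 : ℝ≥0∞) ≠ 0 := by
      exact_mod_cast d.2.1.ne'
    have hdt : (d.1 : ℝ≥0∞) ≠ ⊤ := ENNReal.natCast_ne_top _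
    have hle : (d.1 : ℝ≥0∞) ^ s * (a d.1 : ℝ≥0∞) ≤ S :=
      le_iSup (fun d : {d : ℕ // SmoothLe y d} =>
        (d.1 : ℝ≥0∞) ^ ((1 : ℝ) - 1 / Real.log y) * (a d.1 : ℝ≥0∞)) d
    calc (a d.1 : ℝ≥0∞) = (d.1 : ℝ≥0∞) ^ (-s) * ((d.1 : ℝ≥0∞) ^ s * (a d.1 : ℝ≥0∞)) := by
          rw [← mul_assoc, ← ENNReal.rpow_add _ _ hd0 hdt, neg_add_cancel,
            ENNReal.rpow_zero, one_mul]
      _ ≤ (d.1 : ℝ≥0∞) ^ (-s) * S := mul_le_mul_right hle _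
  have step2 : ∑' d : {d : ℕ // SmoothLe y d}, (a d.1 : ℝ≥0∞)
      ≤ (∑' d : {d : ℕ // SmoothLe y d}, (d.1 : ℝ≥0∞) ^ (-s)) * S := by
    calc ∑' d : {d : ℕ // SmoothLe y d}, (a d.1 : ℝ≥0∞)
        ≤ ∑' d : {d : ℕ // SmoothLe y d}, (d.1 : ℝ≥0∞) ^ (-s) * S :=
          ENNReal.tsum_le_tsum step1
      _ = _ := ENNReal.tsum_mul_right
  refine step2.trans ?_
  refine mul_le_mul_left ?_ S
  -- reindex to smooth numbers
  have h1 : ∑' d : {d : ℕ // SmoothLe y d}, (d.1 : ℝ≥0∞) ^ (-s)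
      = ∑' m : N.smoothNumbers, ((m : ℕ) : ℝ≥0∞) ^ (-s) := by
    have h := Equiv.tsum_eq (Equiv.subtypeEquivRight hiff)
      (fun m : N.smoothNumbers => ((m : ℕ) : ℝ≥0∞) ^ (-s))
    exact h
  rw [h1]
  obtain ⟨hsum_s, hhas_s⟩ := rpowHom_summable_hasSum
    (show -s < 0 by
      rw [hs]
      have hL := aux_log2 hy
      have hL0 : (0:ℝ) < Real.log y := by linarith
      have : 1 / Real.log y ≤ 1/2 := by
        rw [div_le_div_iff₀ hL0 (by norm_num)]
        linarith
      linarith) N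
  have h2 : ∑' m : N.smoothNumbers, ((m : ℕ) : ℝ≥0∞) ^ (-s)
      = ENNReal.ofReal (∑' m : N.smoothNumbers, ((m : ℕ) : ℝ) ^ (-s)) := by
    rw [ENNReal.ofReal_tsum_of_nonneg
      (fun m => Real.rpow_nonneg (Nat.cast_nonneg _) _) hsum_s]
    refine tsum_congr ?_
    intro m
    have hm0 : (0:ℝ) < (m : ℕ) := by
      exact_mod_cast (Nat.pos_of_ne_zero (Nat.ne_zero_of_mem_smoothNumbers m.2))
    rw [← ENNReal.ofReal_rpow_of_pos hm0]
    congr 1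
    rw [ENNReal.ofReal_natCast]
  rw [h2]
  refine ENNReal.ofReal_le_ofReal ?_
  exact aux_main hy
end

section
/- For all sufficiently large real x, with L = (log x)^{10}, D = exp((log log x)^3), R = x^{1/(3 log log x)}: every natural number n with 1 ≤ n ≤ x lies in at least one of the sets A₁, A₂, E, where E is the set of n ≤ x satisfying at least one of: (i) n ≤ x/L; (ii) all prime factors of n are ≤ R; (iii) d² divides n for some d > L; (iv) n is divisible by some d > D all of whose prime factors are ≤ L; (v) n = d·p₂·p₁ with all prime factors of d at most L and p₁, p₂ primes with R/L ≤ p₂ ≤ p₁ ≤ p₂·L; (vi) n = d·p₃·p₂·p₁ with p₁, p₂, p₃ primes satisfying R/L² ≤ p₃ ≤ p₂ ≤ p₁ ≤ p₃·L²; A₁ is the set of n ≤ x of the form n = d·p with all prime factors of d at most L, d ≤ D, p prime, and n > x/L; and A₂ is the set of n ≤ x of the form n = d·p·s with p a prime greater than L, all prime factors of d strictly less than p, and s either a prime or a product of two primes, all of whose prime factors exceed p·L. -/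
open scoped BigOperators

/-- The scale `L = (log x)^10`. -/
noncomputable def Lx (x : ℝ) : ℝ := (Real.log x) ^ 10

/-- The scale `D = exp((log log x)^3)`. -/
noncomputable def Dx (x : ℝ) : ℝ := Real.exp ((Real.log (Real.log x)) ^ 3)

/-- The scale `R = x^(1/(3 log log x))`. -/
noncomputable def Rx (x : ℝ) : ℝ := x ^ (1 / (3 * Real.log (Real.log x)))

/-- Membership in the exceptional set `E`: `n` satisfies at least one of conditions
(i)--(vi). -/
def inE (x : ℝ) (n : ℕ) : Prop :=
  ((n : ℝ) ≤ x / Lx x) ∨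
  (∀ p : ℕ, p.Prime → p ∣ n → (p : ℝ) ≤ Rx x) ∨
  (∃ d : ℕ, Lx x < (d : ℝ) ∧ d ^ 2 ∣ n) ∨
  (∃ d : ℕ, Dx x < (d : ℝ) ∧ (∀ p : ℕ, p.Prime → p ∣ d → (p : ℝ) ≤ Lx x) ∧ d ∣ n) ∨
  (∃ d p₁ p₂ : ℕ, n = d * p₂ * p₁ ∧ (∀ p : ℕ, p.Prime → p ∣ d → (p : ℝ) ≤ Lx x) ∧
    p₁.Prime ∧ p₂.Prime ∧ Rx x / Lx x ≤ (p₂ : ℝ) ∧ p₂ ≤ p₁ ∧ (p₁ : ℝ) ≤ (p₂ : ℝ) * Lx x) ∨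
  (∃ d p₁ p₂ p₃ : ℕ, n = d * p₃ * p₂ * p₁ ∧ p₁.Prime ∧ p₂.Prime ∧ p₃.Prime ∧
    Rx x / (Lx x) ^ 2 ≤ (p₃ : ℝ) ∧ p₃ ≤ p₂ ∧ p₂ ≤ p₁ ∧ (p₁ : ℝ) ≤ (p₃ : ℝ) * (Lx x) ^ 2)

/-- Membership in the primary set `A₁`: `n = d * p` with `d` an `L`-smooth number of size
at most `D`, `p` prime, and `n > x / L`. -/
def inA1 (x : ℝ) (n : ℕ) : Prop :=
  x / Lx x < (n : ℝ) ∧ ∃ d p : ℕ, n = d * p ∧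
    (∀ q : ℕ, q.Prime → q ∣ d → (q : ℝ) ≤ Lx x) ∧ (d : ℝ) ≤ Dx x ∧ p.Prime

/-- Membership in the secondary set `A₂`: `n = d * p * s` with `p` a prime exceeding `L`,
all prime factors of `d` less than `p`, and `s` an almost prime (a prime or a product of two
primes) all of whose prime factors exceed `p * L`. -/
def inA2 (x : ℝ) (n : ℕ) : Prop :=
  ∃ d p s : ℕ, n = d * p * s ∧ p.Prime ∧ Lx x < (p : ℝ) ∧
    (∀ q : ℕ, q.Prime → q ∣ d → q < p) ∧
    (s.Prime ∨ ∃ q₁ q₂ : ℕ, q₁.Prime ∧ q₂.Prime ∧ s = q₁ * q₂) ∧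
    (∀ q : ℕ, q.Prime → q ∣ s → (p : ℝ) * Lx x < (q : ℝ))


/-!
Suppose `n` avoids `E` and peel off its largest prime factors `q₁ > q₂ > q₃`: by (ii) `q₁ > R ≥ L`,
and by (iii) no prime above `L` divides `n` twice, so each peeled prime exceeds every prime factor
of the remaining cofactor. If `n / q₁` is `L`-smooth it is at most `D` by (iv), which gives `A₁`.
Otherwise `q₂ > L`, and `q₁ > q₂ L` gives `A₂` with `s = q₁`. Otherwise either `n / (q₁ q₂)` is
`L`-smooth, which is (v), or `q₃ > L`; then `q₁ ≤ q₃ L²` is (vi), while `q₁ > q₃ L²` forces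
`q₂ ≥ q₁ / L > q₃ L`, giving `A₂` with `s = q₂ q₁`. The only analytic input is `L ≤ R`, that is
`30 (log log x)² ≤ log x`.
-/

def IsSmooth (y : ℝ) (n : ℕ) : Prop := ∀ p : ℕ, p.Prime → p ∣ n → (p : ℝ) ≤ y

lemma exists_eq_mul_prime_of_not_isSmooth {y : ℝ} {n : ℕ} (hn : n ≠ 0)
    (hsq : ∀ m : ℕ, y < m → ¬ m ^ 2 ∣ n) (h : ¬ IsSmooth y n) :
    ∃ k q, n = k * q ∧ q.Prime ∧ y < q ∧ ∀ p : ℕ, p.Prime → p ∣ k → p < q := by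
  simp only [IsSmooth, not_forall, not_le, exists_prop] at h
  obtain ⟨P, hP, hPn, hyP⟩ := h
  have hPmem : P ∈ n.primeFactors := Nat.mem_primeFactors.mpr ⟨hP, hPn, hn⟩
  set q := n.primeFactors.max' ⟨P, hPmem⟩
  obtain ⟨hq, hqn, -⟩ := Nat.mem_primeFactors.mp (n.primeFactors.max'_mem ⟨P, hPmem⟩)
  have hyq : y < q := hyP.trans_le (by exact_mod_cast n.primeFactors.le_max' P hPmem)
  have hnq : n / q * q = n := Nat.div_mul_cancel hqn
  refine ⟨n / q, q, hnq.symm, hq, hyq, fun p hp hpk => ?_⟩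
  have hle : p ≤ q := n.primeFactors.le_max' p
    (Nat.mem_primeFactors.mpr ⟨hp, hpk.trans (Nat.div_dvd_of_dvd hqn), hn⟩)
  refine lt_of_le_of_ne hle fun hpq => ?_
  rw [hpq] at hpk
  exact hsq q hyq (by rw [← hnq, sq]; exact mul_dvd_mul_right hpk q)

lemma thirty_mul_sq_le_exp {z : ℝ} (hz : 180 ≤ z) : 30 * z ^ 2 ≤ Real.exp z := by
  have h := Real.pow_div_factorial_le_exp (x := z) (by linarith) 3
  norm_num [Nat.factorial] at h
  nlinarith

lemma Lx_pos {x : ℝ} (hx : 1 < x) : 0 < Lx x := pow_pos (Real.log_pos hx) 10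

lemma Lx_le_Rx {x : ℝ} (hx : Real.exp (Real.exp 180) ≤ x) : Lx x ≤ Rx x := by
  have hx0 : 0 < x := (Real.exp_pos _).trans_le hx
  have hy : Real.exp 180 ≤ Real.log x := by
    simpa only [Real.log_exp] using Real.log_le_log (Real.exp_pos _) hx
  have hz : 180 ≤ Real.log (Real.log x) := by
    simpa only [Real.log_exp] using Real.log_le_log (Real.exp_pos _) hy
  set y := Real.log x
  set z := Real.log y
  have hyz : Real.exp z = y := Real.exp_log ((Real.exp_pos _).trans_le hy)
  have hL : Lx x = Real.exp (10 * z) := by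
    show y ^ 10 = _
    rw [← hyz, ← Real.exp_nat_mul]
    norm_num
  rw [hL, Rx, Real.rpow_def_of_pos hx0, Real.exp_le_exp, mul_one_div,
    le_div_iff₀ (by positivity)]
  nlinarith [thirty_mul_sq_le_exp hz]

lemma inA2_or_inE_of_eq_mul_three_primes {x : ℝ} (hL : 0 < Lx x) {n d q₁ q₂ q₃ : ℕ}
    (hn : n = d * q₃ * q₂ * q₁) (hq₁ : q₁.Prime) (hq₂ : q₂.Prime) (hq₃ : q₃.Prime)
    (h₃₂ : q₃ ≤ q₂) (h₂₁ : q₂ ≤ q₁) (hRq₁ : Rx x < q₁) (hq₁₂ : (q₁ : ℝ) ≤ q₂ * Lx x)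
    (hLq₃ : Lx x < q₃) (hd : ∀ p : ℕ, p.Prime → p ∣ d → p < q₃) :
    inA2 x n ∨ inE x n := by
  by_cases hq₁₃ : (q₁ : ℝ) ≤ q₃ * Lx x ^ 2
  · refine .inr <| .inr <| .inr <| .inr <| .inr <| .inr
      ⟨d, q₁, q₂, q₃, hn, hq₁, hq₂, hq₃, ?_, h₃₂, h₂₁, hq₁₃⟩
    rw [div_le_iff₀ (by positivity)]
    exact hRq₁.le.trans hq₁₃
  rw [not_le] at hq₁₃
  have hq₃₂ : (q₃ : ℝ) * Lx x < q₂ := by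
    refine lt_of_mul_lt_mul_right ?_ hL.le
    calc (q₃ : ℝ) * Lx x * Lx x = q₃ * Lx x ^ 2 := by ring
      _ < q₁ := hq₁₃
      _ ≤ q₂ * Lx x := hq₁₂
  have hq₃₁ : (q₃ : ℝ) * Lx x < q₁ := hq₃₂.trans_le (by exact_mod_cast h₂₁)
  refine .inl ⟨d, q₃, q₂ * q₁, by rw [hn]; ring, hq₃, hLq₃, hd,
    .inr ⟨q₂, q₁, hq₂, hq₁, rfl⟩, fun q hq hqs => ?_⟩
  rcases hq.dvd_mul.mp hqs with h | h
  · rwa [(Nat.prime_dvd_prime_iff_eq hq hq₂).mp h]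
  · rwa [(Nat.prime_dvd_prime_iff_eq hq hq₁).mp h]

lemma inA2_or_inE_of_eq_mul_two_primes {x : ℝ} (hL : 0 < Lx x) {n d q₁ q₂ : ℕ}
    (hn : n = d * q₂ * q₁) (hq₁ : q₁.Prime) (hq₂ : q₂.Prime) (h₂₁ : q₂ ≤ q₁)
    (hRq₁ : Rx x < q₁) (hLq₂ : Lx x < q₂) (hd : ∀ p : ℕ, p.Prime → p ∣ d → p < q₂)
    (hsq : ∀ m : ℕ, Lx x < m → ¬ m ^ 2 ∣ d) : inA2 x n ∨ inE x n := by
  by_cases hq₂₁ : (q₂ : ℝ) * Lx x < q₁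
  · refine .inl ⟨d, q₂, q₁, hn, hq₂, hLq₂, hd, .inl hq₁, fun q hq hqq₁ => ?_⟩
    rwa [(Nat.prime_dvd_prime_iff_eq hq hq₁).mp hqq₁]
  rw [not_lt] at hq₂₁
  by_cases hsm : IsSmooth (Lx x) d
  · refine .inr <| .inr <| .inr <| .inr <| .inr <| .inl
      ⟨d, q₁, q₂, hn, hsm, hq₁, hq₂, ?_, h₂₁, hq₂₁⟩
    rw [div_le_iff₀ hL]
    exact hRq₁.le.trans hq₂₁
  have hd0 : d ≠ 0 := by
    rintro rfl
    exact (hd q₂ hq₂ (dvd_zero _)).false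
  obtain ⟨d', q₃, rfl, hq₃, hLq₃, hd'⟩ := exists_eq_mul_prime_of_not_isSmooth hd0 hsq hsm
  exact inA2_or_inE_of_eq_mul_three_primes hL hn hq₁ hq₂ hq₃
    (hd q₃ hq₃ (dvd_mul_left _ _)).le h₂₁ hRq₁ hq₂₁ hLq₃ hd'

lemma inA1_or_inA2_or_inE {x : ℝ} (hL : 0 < Lx x) (hLR : Lx x ≤ Rx x) {n : ℕ} (hn : n ≠ 0) :
    inA1 x n ∨ inA2 x n ∨ inE x n := by
  by_cases hE : inE x n
  · exact .inr (.inr hE)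
  have hxn : x / Lx x < n := lt_of_not_ge fun h => hE (.inl h)
  have hR : ¬ IsSmooth (Rx x) n := fun h => hE (.inr (.inl h))
  have hsq : ∀ m : ℕ, Lx x < m → ¬ m ^ 2 ∣ n := fun m hm h => hE (.inr (.inr (.inl ⟨m, hm, h⟩)))
  have hD : ∀ m : ℕ, Dx x < m → IsSmooth (Lx x) m → ¬ m ∣ n :=
    fun m hm hsm h => hE (.inr (.inr (.inr (.inl ⟨m, hm, hsm, h⟩))))
  obtain ⟨n₁, q₁, rfl, hq₁, hRq₁, hn₁⟩ := exists_eq_mul_prime_of_not_isSmooth hn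
    (fun m hm => hsq m (hLR.trans_lt hm)) hR
  by_cases hsm : IsSmooth (Lx x) n₁
  · exact .inl ⟨hxn, n₁, q₁, rfl, hsm,
      le_of_not_gt fun h => hD n₁ h hsm (dvd_mul_right _ _), hq₁⟩
  obtain ⟨n₂, q₂, rfl, hq₂, hLq₂, hn₂⟩ := exists_eq_mul_prime_of_not_isSmooth
    (left_ne_zero_of_mul hn) (fun m hm h => hsq m hm (h.trans (dvd_mul_right _ _))) hsm
  exact .inr <| inA2_or_inE_of_eq_mul_two_primes hL rfl hq₁ hq₂
    (hn₁ q₂ hq₂ (dvd_mul_left _ _)).le hRq₁ hLq₂ hn₂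
    (fun m hm h => hsq m hm (h.trans ((dvd_mul_right _ _).trans (dvd_mul_right _ _))))

theorem stmt7 : ∃ x₀ : ℝ, ∀ x : ℝ, x₀ ≤ x → ∀ n : ℕ, 1 ≤ n → (n : ℝ) ≤ x →
    inA1 x n ∨ inA2 x n ∨ inE x n := by
  refine ⟨Real.exp (Real.exp 180), fun x hx n hn _ => ?_⟩
  have hx1 : 1 < x := (Real.one_lt_exp_iff.mpr (Real.exp_pos _)).trans_le hx
  exact inA1_or_inA2_or_inE (Lx_pos hx1) (Lx_le_Rx hx) (Nat.one_le_iff_ne_zero.mp hn)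
end

section
/- Suppose there exist infinitely many primes p such that there is no prime strictly between (p−1)² and p². Then M(x) − π(x) tends to infinity as x → ∞. -/
/-!
Besides all primes, a set on which `φ` is nondecreasing may contain the squares `p²` of those
primes `p` with no prime in `((p - 1)², p²)`: every prime `q < p²` is then at most `(p - 1)²`, so
`φ q < (p - 1)² ≤ p (p - 1) = φ (p²)`, while every prime `q > p²` has `φ q ≥ p² > φ (p²)`.
Hence `M(x) ≥ π(x) + #{p : p² ≤ x}` over such `p`, and the last count is unbounded.
-/

open scoped BigOperators

/-- `M A` is the largest cardinality of a subset of `A` on which the Euler totient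
function is nondecreasing. -/
noncomputable def M (A : Set ℕ) : ℕ :=
  sSup {k : ℕ | ∃ B : Finset ℕ, ↑B ⊆ A ∧
    (∀ m ∈ B, ∀ n ∈ B, m ≤ n → Nat.totient m ≤ Nat.totient n) ∧ B.card = k}

/-- `Mx x = M([x])` where `[x] = {n : ℕ | 1 ≤ n ≤ x}`. -/
noncomputable def Mx (x : ℝ) : ℕ := M {n : ℕ | 1 ≤ n ∧ (n : ℝ) ≤ x}

/-- The number of primes up to the real number `x`. -/
noncomputable def primePi (x : ℝ) : ℕ := {p : ℕ | p.Prime ∧ (p : ℝ) ≤ x}.ncard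

open Nat Set

def LegendreFailsAt (p : ℕ) : Prop :=
  p.Prime ∧ ∀ q : ℕ, (p - 1) ^ 2 < q → q < p ^ 2 → ¬q.Prime

lemma Nat.totient_sq_of_prime {p : ℕ} (hp : p.Prime) : φ (p ^ 2) = p * (p - 1) := by
  simpa using totient_prime_pow_succ hp 1

lemma totient_prime_le_totient_sq {p q : ℕ} (hp : LegendreFailsAt p) (hq : q.Prime)
    (hqp : q ≤ p ^ 2) : φ q ≤ φ (p ^ 2) := by
  have hlt : q < p ^ 2 := hqp.lt_of_ne fun h => Prime.not_prime_pow' (by norm_num) (h ▸ hq)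
  have hle : q ≤ (p - 1) ^ 2 := by
    by_contra! hgt
    exact hp.2 q hgt hlt hq
  have hsq : (p - 1) ^ 2 ≤ p * (p - 1) := by
    rw [sq]
    exact Nat.mul_le_mul_right _ (sub_le p 1)
  rw [totient_prime hq, totient_sq_of_prime hp.1]
  omega

lemma totient_sq_le_totient_prime {p q : ℕ} (hp : p.Prime) (hq : q.Prime)
    (hpq : p ^ 2 ≤ q) : φ (p ^ 2) ≤ φ q := by
  have hlt : p ^ 2 < q := hpq.lt_of_ne fun h => Prime.not_prime_pow' (by norm_num) (h ▸ hq)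
  have hle : p * (p - 1) ≤ p ^ 2 := by
    rw [sq]
    exact Nat.mul_le_mul_left _ (sub_le p 1)
  rw [totient_prime hq, totient_sq_of_prime hp]
  omega

lemma totient_sq_le_totient_sq {p r : ℕ} (hp : p.Prime) (hr : r.Prime) (hpr : p ^ 2 ≤ r ^ 2) :
    φ (p ^ 2) ≤ φ (r ^ 2) := by
  have hpr : p ≤ r := (Nat.pow_le_pow_iff_left two_ne_zero).1 hpr
  rw [totient_sq_of_prime hp, totient_sq_of_prime hr]
  exact Nat.mul_le_mul hpr (Nat.sub_le_sub_right hpr 1)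

lemma monotoneOn_totient_primes_union_sq :
    MonotoneOn φ ({q | q.Prime} ∪ (· ^ 2) '' {p | LegendreFailsAt p}) := by
  rintro m (hm | ⟨p, hp, rfl⟩) n (hn | ⟨r, hr, rfl⟩) hmn
  · rw [totient_prime hm, totient_prime hn]
    omega
  · exact totient_prime_le_totient_sq hr hm hmn
  · exact totient_sq_le_totient_prime hp.1 hn hmn
  · exact totient_sq_le_totient_sq hp.1 hr.1 hmn

lemma card_le_M {A B : Set ℕ} (hA : A.Finite) (hBA : B ⊆ A) (hB : MonotoneOn φ B) :
    B.ncard ≤ M A := by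
  have hBfin : B.Finite := hA.subset hBA
  refine le_csSup ⟨hA.toFinset.card, ?_⟩ ⟨hBfin.toFinset, by simpa using hBA,
    fun m hm n hn => hB (hBfin.mem_toFinset.1 hm) (hBfin.mem_toFinset.1 hn),
    (ncard_eq_toFinset_card B hBfin).symm⟩
  rintro k ⟨C, hCA, -, rfl⟩
  exact Finset.card_le_card (by simpa using hCA)

lemma finite_setOf_one_le_cast_le (x : ℝ) : {n : ℕ | 1 ≤ n ∧ (n : ℝ) ≤ x}.Finite :=
  (finite_Iic ⌊x⌋₊).subset fun _ hn => le_floor hn.2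

lemma primePi_add_card_le_Mx {x : ℝ} (F : Finset ℕ) (hF : ∀ p ∈ F, LegendreFailsAt p)
    (hFx : ∀ p ∈ F, ((p ^ 2 : ℕ) : ℝ) ≤ x) : primePi x + F.card ≤ Mx x := by
  set P := {q : ℕ | q.Prime ∧ (q : ℝ) ≤ x}
  have hPA : P ⊆ {n : ℕ | 1 ≤ n ∧ (n : ℝ) ≤ x} := fun q hq => ⟨hq.1.one_le, hq.2⟩
  have hFA : (· ^ 2) '' (F : Set ℕ) ⊆ {n : ℕ | 1 ≤ n ∧ (n : ℝ) ≤ x} := by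
    rintro _ ⟨p, hp, rfl⟩
    exact ⟨Nat.one_le_pow _ _ (hF p hp).1.pos, hFx p hp⟩
  have hdisj : Disjoint P ((· ^ 2) '' (F : Set ℕ)) := by
    rw [Set.disjoint_left]
    rintro _ hq ⟨p, -, rfl⟩
    exact Prime.not_prime_pow' (by norm_num) hq.1
  have hmono : MonotoneOn φ (P ∪ (· ^ 2) '' (F : Set ℕ)) :=
    monotoneOn_totient_primes_union_sq.mono <|
      union_subset_union (fun q hq => hq.1) (image_mono hF)
  have hcard := card_le_M (finite_setOf_one_le_cast_le x) (union_subset hPA hFA) hmono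
  rwa [ncard_union_eq hdisj ((finite_setOf_one_le_cast_le x).subset hPA) (F.finite_toSet.image _),
    ncard_image_of_injective _ (Nat.pow_left_injective two_ne_zero), ncard_coe_finset] at hcard

/-- If Legendre's conjecture fails for infinitely many primes `p` (no prime strictly between
`(p-1)²` and `p²`), then `M(x) - π(x) → ∞` as `x → ∞`. -/
theorem stmt11
    (h : {p : ℕ | p.Prime ∧ ∀ q : ℕ, (p - 1) ^ 2 < q → q < p ^ 2 → ¬q.Prime}.Infinite) :
    Filter.Tendsto (fun x : ℝ => (Mx x : ℤ) - (primePi x : ℤ)) Filter.atTop Filter.atTop := by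
  rw [Filter.tendsto_atTop]
  intro b
  obtain ⟨F, hFS, hFcard⟩ := h.exists_subset_card_eq b.toNat
  filter_upwards [Filter.eventually_ge_atTop ((F.sup (· ^ 2) : ℕ) : ℝ)] with x hx
  have hFx : ∀ p ∈ F, ((p ^ 2 : ℕ) : ℝ) ≤ x := fun p hp =>
    le_trans (by exact_mod_cast Finset.le_sup (f := (· ^ 2)) hp) hx
  have hbound := primePi_add_card_le_Mx F (fun p hp => hFS hp) hFx
  have hb := Int.self_le_toNat b
  omega
end

section
/- There do not exist coprime squarefree natural numbers a, a' with a > 1 and a' > 1 such that σ(a)/a = σ(a')/a' (equivalently, such that σ(a)·a' = σ(a')·a). -/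
/-!
If `σ(a) a' = σ(a') a` with `a, a'` coprime, then `a ∣ σ(a)` and `a' ∣ σ(a')`. For squarefree
`n > 1`, `σ(n) = ∏_{p ∣ n} (p + 1)`, so the largest prime factor `p` of `n ∣ σ(n)` divides `q + 1`
for some prime factor `q ≤ p`; this forces `q = 2`, `p = 3`, hence `n = 6`. So `a = a' = 6`,
contradicting coprimality.
-/

open scoped BigOperators

/-- The sum-of-divisors function `σ(n) = ∑_{d ∣ n} d`. -/
def sigma1 (n : ℕ) : ℕ := ∑ d ∈ n.divisors, d

lemma Squarefree.sigma1_eq_prod_primeFactors {n : ℕ} (hsf : Squarefree n) :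
    sigma1 n = ∏ p ∈ n.primeFactors, (p + 1) := by
  rw [sigma1, Nat.sum_divisors hsf.ne_zero]
  refine Finset.prod_congr rfl fun p hp => ?_
  obtain ⟨hp, hpn, -⟩ := Nat.mem_primeFactors.mp hp
  rw [Nat.factorization_eq_one_of_squarefree hsf hp hpn]
  simp [Finset.sum_range_succ, Nat.add_comm]

lemma Nat.Prime.eq_two_and_eq_three_of_dvd_succ {p q : ℕ} (hp : p.Prime) (hq : q.Prime)
    (hqp : q ≤ p) (hdvd : p ∣ q + 1) : q = 2 ∧ p = 3 := by
  have hp_le : p ≤ q + 1 := Nat.le_of_dvd q.succ_pos hdvd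
  have hp_ne : p ≠ q := by
    rintro rfl
    exact hp.one_lt.ne' (Nat.dvd_one.mp ((Nat.dvd_add_right dvd_rfl).mp hdvd))
  have := hp.two_le
  have := hq.two_le
  rcases hp.eq_two_or_odd with hp2 | hp2 <;> rcases hq.eq_two_or_odd with hq2 | hq2 <;> omega

lemma Squarefree.eq_six_of_dvd_sigma1 {n : ℕ} (hn : 1 < n) (hsf : Squarefree n)
    (hdvd : n ∣ sigma1 n) : n = 6 := by
  have hne : n.primeFactors.Nonempty := Nat.nonempty_primeFactors.mpr hn
  set p := n.primeFactors.max' hne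
  have hp_mem : p ∈ n.primeFactors := n.primeFactors.max'_mem hne
  have hp : p.Prime := Nat.prime_of_mem_primeFactors hp_mem
  have hp_dvd : p ∣ ∏ q ∈ n.primeFactors, (q + 1) :=
    hsf.sigma1_eq_prod_primeFactors ▸ (Nat.dvd_of_mem_primeFactors hp_mem).trans hdvd
  obtain ⟨q, hq_mem, hpq⟩ := (Prime.dvd_finsetProd_iff hp.prime _).mp hp_dvd
  obtain ⟨rfl, hp3⟩ := hp.eq_two_and_eq_three_of_dvd_succ (Nat.prime_of_mem_primeFactors hq_mem)
    (n.primeFactors.le_max' q hq_mem) hpq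
  have hfactors : n.primeFactors = {2, 3} := by
    refine Finset.Subset.antisymm (fun r hr => ?_) ?_
    · have := (Nat.prime_of_mem_primeFactors hr).two_le
      have := n.primeFactors.le_max' r hr
      simp only [Finset.mem_insert, Finset.mem_singleton]
      omega
    · simp [Finset.insert_subset_iff, hq_mem, ← hp3, hp_mem]
  simpa [hfactors] using (Nat.prod_primeFactors_of_squarefree hsf).symm

theorem stmt15 : ¬∃ a a' : ℕ, 1 < a ∧ 1 < a' ∧ Nat.Coprime a a' ∧
    Squarefree a ∧ Squarefree a' ∧ (sigma1 a : ℚ) / a = (sigma1 a' : ℚ) / a' := by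
  rintro ⟨a, a', ha, ha', hcop, hsa, hsa', heq⟩
  rw [div_eq_div_iff (by positivity) (by positivity)] at heq
  have hcross : sigma1 a * a' = sigma1 a' * a := by exact_mod_cast heq
  have hda : a ∣ sigma1 a := hcop.dvd_of_dvd_mul_right (hcross ▸ dvd_mul_left a _)
  have hda' : a' ∣ sigma1 a' := hcop.symm.dvd_of_dvd_mul_right (hcross ▸ dvd_mul_left a' _)
  rw [hsa.eq_six_of_dvd_sigma1 ha hda, hsa'.eq_six_of_dvd_sigma1 ha' hda'] at hcop
  exact absurd hcop (by decide)
end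

section
/- For every ε > 0, there are only finitely many positive rational numbers q for which ∑_{d : σ(d)/d = q} 1/d ≥ ε, where the sum ranges over all natural numbers d ≥ 1 with σ(d)/d = q. -/
open scoped BigOperators ENNReal

namespace Stmt17

open Finset Classical

abbrev P (q : ℚ) (n : ℕ) : Prop := 0 < n ∧ (sigma1 n : ℚ) / n = q

lemma sigma1_pos {n : ℕ} (hn : 0 < n) : 0 < sigma1 n := by
  apply Finset.sum_pos (fun d hd => Nat.pos_of_mem_divisors hd)
  exact ⟨1, Nat.one_mem_divisors.2 hn.ne'⟩

lemma sigma1_prime {p : ℕ} (hp : p.Prime) : sigma1 p = p + 1 := by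
  unfold sigma1
  rw [hp.divisors, Finset.sum_pair hp.one_lt.ne]
  omega

lemma sigma1_mul {p m : ℕ} (hp : p.Prime) (hpm : ¬ p ∣ m) :
    sigma1 (p * m) = (p + 1) * sigma1 m := by
  have hc : Nat.Coprime p m := (Nat.Prime.coprime_iff_not_dvd hp).2 hpm
  unfold sigma1
  rw [hc.sum_divisors_mul]
  rw [show ∑ d ∈ p.divisors, d = sigma1 p from rfl, sigma1_prime hp]

lemma P_eq {q : ℚ} {n : ℕ} (h : P q n) : (sigma1 n : ℚ) = q * n := by
  have hn : ((n : ℚ)) ≠ 0 := by exact_mod_cast h.1.ne'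
  have := h.2
  rw [div_eq_iff hn] at this
  exact this

/-- Case 1: class elements with a prime factor `> T` appearing exactly once. -/
lemma card_case1 (q : ℚ) (y T : ℕ) :
    (((Finset.Icc 1 y).filter
      (fun n => P q n ∧ ∃ p, p.Prime ∧ T < p ∧ p ∣ n ∧ ¬ (p * p ∣ n))).card) ≤ y / (T + 1) := by
  classical
  have hcard : (Finset.Icc 1 (y / (T+1))).card = y / (T+1) := by
    rw [Nat.card_Icc]; exact Nat.succ_sub_one _
  rw [← hcard]
  set pf : ℕ → ℕ := fun n =>
    if h : ∃ p, p.Prime ∧ T < p ∧ p ∣ n ∧ ¬ (p * p ∣ n) then h.choose else 1 with hpf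
  -- basic spec
  have spec : ∀ n, (∃ p, p.Prime ∧ T < p ∧ p ∣ n ∧ ¬ (p * p ∣ n)) →
      (pf n).Prime ∧ T < pf n ∧ pf n ∣ n ∧ ¬ (pf n * pf n ∣ n) := by
    intro n h
    simp only [hpf, dif_pos h]
    exact h.choose_spec
  apply Finset.card_le_card_of_injOn (fun n => n / pf n)
  · intro n hn
    simp only [Finset.mem_coe, Finset.mem_filter, Finset.mem_Icc] at hn
    obtain ⟨⟨hn1, hny⟩, hP, hex⟩ := hn
    obtain ⟨hprime, hT, hdvd, _⟩ := spec n hex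
    have hppos : 0 < pf n := hprime.pos
    have hmul : n / pf n * pf n = n := Nat.div_mul_cancel hdvd
    simp only [Finset.mem_coe, Finset.mem_Icc]
    constructor
    · exact Nat.div_pos (Nat.le_of_dvd (by omega) hdvd) hppos
    · rw [Nat.le_div_iff_mul_le (by omega : 0 < T + 1)]
      calc n / pf n * (T + 1) ≤ n / pf n * pf n := by
            apply Nat.mul_le_mul_left; omega
        _ = n := hmul
        _ ≤ y := hny
  · intro n1 h1 n2 h2 heq
    simp only [Finset.coe_filter, Set.mem_setOf_eq, Finset.mem_Icc] at h1 h2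
    obtain ⟨⟨h11, h1y⟩, hP1, hex1⟩ := h1
    obtain ⟨⟨h21, h2y⟩, hP2, hex2⟩ := h2
    obtain ⟨hp1, hT1, hd1, hsq1⟩ := spec n1 hex1
    obtain ⟨hp2, hT2, hd2, hsq2⟩ := spec n2 hex2
    have heq' : n1 / pf n1 = n2 / pf n2 := heq
    set p1 := pf n1; set p2 := pf n2
    set m := n1 / p1 with hm
    have hmul1 : p1 * m = n1 := by rw [hm, Nat.mul_div_cancel' hd1]
    have hmul2 : p2 * m = n2 := by
      rw [heq', Nat.mul_div_cancel' hd2]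
    have hpm1 : ¬ p1 ∣ m := by
      intro hdvd
      exact hsq1 (by rw [← hmul1]; exact mul_dvd_mul_left p1 hdvd)
    have hpm2 : ¬ p2 ∣ m := by
      intro hdvd
      exact hsq2 (by rw [← hmul2]; exact mul_dvd_mul_left p2 hdvd)
    have hmpos : 0 < m := by
      rcases Nat.eq_zero_or_pos m with h | h
      · rw [h, mul_zero] at hmul1; omega
      · exact h
    have e1 : ((p1 : ℚ) + 1) * (sigma1 m : ℚ) = q * ((p1 : ℚ) * (m : ℚ)) := by
      have := P_eq hP1
      rw [← hmul1, sigma1_mul hp1 hpm1] at this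
      push_cast at this ⊢
      linarith [this]
    have e2 : ((p2 : ℚ) + 1) * (sigma1 m : ℚ) = q * ((p2 : ℚ) * (m : ℚ)) := by
      have := P_eq hP2
      rw [← hmul2, sigma1_mul hp2 hpm2] at this
      push_cast at this ⊢
      linarith [this]
    have hS : (sigma1 m : ℚ) ≠ 0 := by
      exact_mod_cast (sigma1_pos hmpos).ne'
    have key : ((p1 : ℚ) + 1) * (p2 : ℚ) = ((p2 : ℚ) + 1) * (p1 : ℚ) := by
      have h3 : (((p1:ℚ) + 1) * (p2:ℚ)) * (sigma1 m : ℚ)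
          = (((p2:ℚ) + 1) * (p1:ℚ)) * (sigma1 m : ℚ) := by
        linear_combination (p2:ℚ) * e1 - (p1:ℚ) * e2
      exact mul_right_cancel₀ hS h3
    have : (p1 : ℚ) = (p2 : ℚ) := by ring_nf at key; linarith
    have hp12 : p1 = p2 := by exact_mod_cast this
    rw [← hmul1, ← hmul2, hp12]


lemma sum_inv_sq_le (a : ℕ) (ha : 1 ≤ a) (b : ℕ) :
    ∑ k ∈ Finset.Icc (a+1) b, (1:ℝ)/(k:ℝ)^2 ≤ 1/(a:ℝ) := by
  have ha' : (0:ℝ) < a := by exact_mod_cast ha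
  rcases le_or_gt b a with hb | hb
  · have : Finset.Icc (a+1) b = ∅ := Finset.Icc_eq_empty (by omega)
    rw [this]
    simp only [Finset.sum_empty]
    positivity
  · have key : ∀ c : ℕ, a ≤ c → ∑ k ∈ Finset.Icc (a+1) c, (1:ℝ)/(k:ℝ)^2 ≤ 1/(a:ℝ) - 1/(c:ℝ) := by
      intro c hc
      induction c, hc using Nat.le_induction with
      | base =>
        have : Finset.Icc (a+1) a = ∅ := Finset.Icc_eq_empty (by omega)
        rw [this]
        simp
      | succ c hc ih =>
        rw [Finset.sum_Icc_succ_top (by omega : a + 1 ≤ c + 1)]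
        have hc' : (0:ℝ) < c := lt_of_lt_of_le ha' (by exact_mod_cast hc)
        have hc1 : (0:ℝ) < (c:ℝ) + 1 := by linarith
        have h1 : (1:ℝ)/((c:ℝ)+1)^2 ≤ 1/((c:ℝ)*((c:ℝ)+1)) := by
          apply one_div_le_one_div_of_le
          · positivity
          · nlinarith
        have h2 : (1:ℝ)/((c:ℝ)*((c:ℝ)+1)) = 1/(c:ℝ) - 1/((c:ℝ)+1) := by
          field_simp
          ring
        push_cast
        push_cast at ih
        linarith
    have := key b (le_of_lt hb)
    have hbpos : (0:ℝ) < b := lt_of_lt_of_le ha' (by exact_mod_cast (le_of_lt hb))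
    have : (0:ℝ) ≤ 1/(b:ℝ) := by positivity
    linarith [key b (le_of_lt hb)]

/-- Case 2: numbers `≤ y` divisible by the square of a prime `> T`. -/
lemma card_case2 (y T : ℕ) (hT : 1 ≤ T) :
    (((Finset.Icc 1 y).filter (fun n => ∃ p : ℕ, p.Prime ∧ T < p ∧ p * p ∣ n)).card : ℝ)
      ≤ (y : ℝ) / (T : ℝ) := by
  classical
  have hsub : (Finset.Icc 1 y).filter (fun n => ∃ p : ℕ, p.Prime ∧ T < p ∧ p * p ∣ n)
      ⊆ (Finset.Icc (T+1) y).biUnion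
          (fun k => (Finset.Icc 1 y).filter (fun n => k * k ∣ n)) := by
    intro n hn
    rw [Finset.mem_filter] at hn
    obtain ⟨hn1, p, hp, hTp, hdvd⟩ := hn
    rw [Finset.mem_Icc] at hn1
    rw [Finset.mem_biUnion]
    refine ⟨p, ?_, ?_⟩
    · rw [Finset.mem_Icc]
      constructor
      · omega
      · calc p ≤ p * p := Nat.le_mul_of_pos_left p hp.pos
          _ ≤ n := Nat.le_of_dvd (by omega) hdvd
          _ ≤ y := hn1.2
    · rw [Finset.mem_filter, Finset.mem_Icc]
      exact ⟨hn1, hdvd⟩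
  have hcount : ∀ k : ℕ, ((Finset.Icc 1 y).filter (fun n => k * k ∣ n)).card = y / (k * k) := by
    intro k
    have : Finset.Icc 1 y = Finset.Ioc 0 y := rfl
    rw [this]
    exact Nat.Ioc_filter_dvd_card_eq_div y (k*k)
  calc (((Finset.Icc 1 y).filter (fun n => ∃ p : ℕ, p.Prime ∧ T < p ∧ p * p ∣ n)).card : ℝ)
      ≤ (((Finset.Icc (T+1) y).biUnion
          (fun k => (Finset.Icc 1 y).filter (fun n => k * k ∣ n))).card : ℝ) := by
        exact_mod_cast Nat.cast_le.2 (Finset.card_le_card hsub)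
    _ ≤ ((∑ k ∈ Finset.Icc (T+1) y, ((Finset.Icc 1 y).filter (fun n => k * k ∣ n)).card : ℕ) : ℝ) := by
        exact_mod_cast Finset.card_biUnion_le
    _ = ∑ k ∈ Finset.Icc (T+1) y, ((y / (k * k) : ℕ) : ℝ) := by
        rw [Nat.cast_sum]
        exact Finset.sum_congr rfl (fun k _ => by rw [hcount k])
    _ ≤ ∑ k ∈ Finset.Icc (T+1) y, (y : ℝ) * (1/(k:ℝ)^2) := by
        apply Finset.sum_le_sum
        intro k hk
        rw [Finset.mem_Icc] at hk
        have : ((y / (k * k) : ℕ) : ℝ) ≤ (y : ℝ) / ((k * k : ℕ) : ℝ) := Nat.cast_div_le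
        refine this.trans ?_
        push_cast
        rw [mul_one_div]
        exact le_of_eq (by ring)
    _ = (y : ℝ) * ∑ k ∈ Finset.Icc (T+1) y, (1/(k:ℝ)^2) := by rw [Finset.mul_sum]
    _ ≤ (y : ℝ) * (1/(T:ℝ)) := by
        apply mul_le_mul_of_nonneg_left (sum_inv_sq_le T hT y) (by positivity)
    _ = (y : ℝ) / (T : ℝ) := by rw [mul_one_div]


lemma rpow_quarter_pow4 (x : ℝ) (hx : 0 ≤ x) : (x ^ ((1:ℝ)/4)) ^ (4:ℕ) = x := by
  rw [← Real.rpow_natCast (x ^ ((1:ℝ)/4)) 4, ← Real.rpow_mul hx]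
  norm_num

lemma rpow_quarter_pow3 (x : ℝ) (hx : 0 ≤ x) : (x ^ ((1:ℝ)/4)) ^ (3:ℕ) = x ^ ((3:ℝ)/4) := by
  rw [← Real.rpow_natCast (x ^ ((1:ℝ)/4)) 3, ← Real.rpow_mul hx]
  norm_num

lemma sum_rpow_le : ∀ T : ℕ, ∑ k ∈ Finset.Icc 2 T, (k:ℝ) ^ (-((3:ℝ)/4)) ≤ 4 * (T:ℝ) ^ ((1:ℝ)/4) := by
  intro T
  induction T with
  | zero => simp
  | succ T ih =>
    rcases Nat.lt_or_ge (T+1) 2 with h2 | h2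
    · have : Finset.Icc 2 (T+1) = ∅ := Finset.Icc_eq_empty (by omega)
      rw [this]
      simp only [Finset.sum_empty]
      positivity
    · rw [Finset.sum_Icc_succ_top h2]
      have hT0 : (0:ℝ) ≤ (T:ℝ) := by positivity
      have hT10 : (0:ℝ) ≤ (T:ℝ) + 1 := by linarith
      set s := ((T:ℝ)+1) ^ ((1:ℝ)/4) with hs
      set t := (T:ℝ) ^ ((1:ℝ)/4) with ht
      have hts : t ≤ s := by
        apply Real.rpow_le_rpow hT0 (by linarith) (by norm_num)
      have ht0 : 0 ≤ t := Real.rpow_nonneg hT0 _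
      have hs0 : 0 < s := by
        apply Real.rpow_pos_of_pos (by linarith) 
      have hs4 : s ^ (4:ℕ) = (T:ℝ) + 1 := rpow_quarter_pow4 _ hT10
      have ht4 : t ^ (4:ℕ) = (T:ℝ) := rpow_quarter_pow4 _ hT0
      have hid : (s - t) * (s^3 + s^2*t + s*t^2 + t^3) = 1 := by
        have : (s - t) * (s^3 + s^2*t + s*t^2 + t^3) = s^(4:ℕ) - t^(4:ℕ) := by ring
        rw [this, hs4, ht4]
        ring
      have key : 1 ≤ 4 * (s - t) * s ^ (3:ℕ) := by
        have hst : 0 ≤ s - t := by linarith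
        have expand : 4*(s-t)*s^(3:ℕ) - (s-t)*(s^3+s^2*t+s*t^2+t^3)
            = s^2*(s-t)^2 + s*(s+t)*(s-t)^2 + (s^2+s*t+t^2)*(s-t)^2 := by ring
        have e1 : 0 ≤ s^2*(s-t)^2 := mul_nonneg (sq_nonneg s) (sq_nonneg _)
        have e2 : 0 ≤ s*(s+t)*(s-t)^2 :=
          mul_nonneg (mul_nonneg hs0.le (by linarith)) (sq_nonneg _)
        have e3 : 0 ≤ (s^2+s*t+t^2)*(s-t)^2 := by
          apply mul_nonneg _ (sq_nonneg _)
          have := sq_nonneg s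
          have := sq_nonneg t
          nlinarith [mul_nonneg hs0.le ht0]
        linarith
      have hval : (((T:ℕ)+1:ℕ):ℝ) ^ (-((3:ℝ)/4)) = (s ^ (3:ℕ))⁻¹ := by
        push_cast
        rw [Real.rpow_neg hT10, rpow_quarter_pow3 _ hT10]
      have h3 : (s ^ (3:ℕ))⁻¹ ≤ 4 * (s - t) := by
        rw [inv_le_iff_one_le_mul₀ (by positivity)]
        nlinarith [key]
      have hgoal : 4 * ((T:ℝ)+1) ^ ((1:ℝ)/4) = 4 * s := rfl
      push_cast
      push_cast at ih hval
      linarith [ih, hval.le, h3, hval.ge]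

lemma inv_one_sub_le_exp {r : ℝ} (hr0 : 0 ≤ r) (hr : r ≤ 2/3) : (1 - r)⁻¹ ≤ Real.exp (3 * r) := by
  have h1 : 0 < 1 - r := by linarith
  have h2 : (1 - r)⁻¹ ≤ 1 + 3 * r := by
    rw [inv_le_iff_one_le_mul₀ h1]
    nlinarith
  have h3 : 3 * r + 1 ≤ Real.exp (3 * r) := Real.add_one_le_exp _
  linarith

lemma two_rpow_ge : (3:ℝ)/2 ≤ (2:ℝ) ^ ((3:ℝ)/4) := by
  apply le_of_pow_le_pow_left₀ (n := 4) (by norm_num) (Real.rpow_nonneg (by norm_num) _)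
  have : ((2:ℝ) ^ ((3:ℝ)/4)) ^ (4:ℕ) = (2:ℝ)^(3:ℕ) := by
    rw [← Real.rpow_natCast ((2:ℝ) ^ ((3:ℝ)/4)) 4, ← Real.rpow_mul (by norm_num : (0:ℝ) ≤ 2),
      ← Real.rpow_natCast 2 3]
    norm_num
  rw [this]
  norm_num

/-- Rankin's trick: counting T-smooth numbers up to y. -/
lemma card_smooth (y T : ℕ) (hT : 2 ≤ T) :
    (((Finset.Icc 1 y).filter (fun n => ∀ p : ℕ, p.Prime → p ∣ n → p ≤ T)).card : ℝ)
      ≤ (y:ℝ) ^ ((3:ℝ)/4) * Real.exp (12 * (T:ℝ) ^ ((1:ℝ)/4)) := by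
  classical
  set S := (Finset.Icc 1 y).filter (fun n => ∀ p : ℕ, p.Prime → p ∣ n → p ≤ T) with hSdef
  set F := Nat.primesBelow (T+1) with hF
  set E := Nat.log 2 y with hE
  have hSmem : ∀ n ∈ S, (1 ≤ n ∧ n ≤ y) ∧ ∀ p : ℕ, p.Prime → p ∣ n → p ≤ T := by
    intro n hn
    rw [hSdef, Finset.mem_filter, Finset.mem_Icc] at hn
    exact hn
  have hfact : ∀ n ∈ S, ∏ p ∈ F, p ^ (n.factorization p) = n := by
    intro n hn
    obtain ⟨⟨hn1, hny⟩, hsm⟩ := hSmem n hn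
    have hne : n ≠ 0 := by omega
    have hsupp : n.factorization.support ⊆ F := by
      rw [Nat.support_factorization]
      intro p hp
      have hpp := Nat.prime_of_mem_primeFactors hp
      have hpd := Nat.dvd_of_mem_primeFactors hp
      rw [hF, Nat.mem_primesBelow]
      exact ⟨by have := hsm p hpp hpd; omega, hpp⟩
    have hprod : n.factorization.prod (· ^ ·) = n := Nat.factorization_prod_pow_eq_self hne
    conv_rhs => rw [← hprod]
    rw [Finsupp.prod]
    exact (Finset.prod_subset hsupp (fun p _ hp => by
      rw [Finsupp.notMem_support_iff.1 hp, pow_zero])).symm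
  have hexp : ∀ n ∈ S, ∀ p ∈ F, n.factorization p ≤ E := by
    intro n hn p hpF
    obtain ⟨⟨hn1, hny⟩, _⟩ := hSmem n hn
    have hp2 : 2 ≤ p := (Nat.prime_of_mem_primesBelow (hF ▸ hpF)).two_le
    have hdvd : p ^ n.factorization p ∣ n := Nat.ordProj_dvd n p
    have hle : p ^ n.factorization p ≤ y :=
      le_trans (Nat.le_of_dvd (by omega) hdvd) hny
    have h2e : 2 ^ n.factorization p ≤ y :=
      le_trans (Nat.pow_le_pow_left hp2 _) hle
    exact Nat.le_log_of_pow_le (by norm_num) h2e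
  -- weights
  set w : ℕ → ℝ := fun n => (n:ℝ) ^ (-((3:ℝ)/4)) with hw
  have hw0 : ∀ n, 0 ≤ w n := fun n => Real.rpow_nonneg (Nat.cast_nonneg n) _
  -- step 1
  have step1 : (S.card : ℝ) ≤ (y:ℝ) ^ ((3:ℝ)/4) * ∑ n ∈ S, w n := by
    rw [Finset.mul_sum]
    have : (S.card : ℝ) = ∑ _n ∈ S, (1:ℝ) := by simp
    rw [this]
    apply Finset.sum_le_sum
    intro n hn
    obtain ⟨⟨hn1, hny⟩, _⟩ := hSmem n hn
    have hnpos : (0:ℝ) < (n:ℝ) := by exact_mod_cast hn1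
    have h1 : (1:ℝ) = (n:ℝ) ^ ((3:ℝ)/4) * (n:ℝ) ^ (-((3:ℝ)/4)) := by
      rw [← Real.rpow_add hnpos]
      norm_num
    rw [h1]
    apply mul_le_mul_of_nonneg_right _ (hw0 n)
    apply Real.rpow_le_rpow hnpos.le (by exact_mod_cast hny) (by norm_num)
  -- step 2
  have step2 : ∑ n ∈ S, w n ≤ ∏ p ∈ F, (1 - (p:ℝ) ^ (-((3:ℝ)/4)))⁻¹ := by
    set ι := {x // x ∈ F}
    set t : ι → Finset ℕ := fun _ => Finset.range (E+1) with htdef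
    set g : ι → ℕ → ℝ := fun p e => (((p:ℕ):ℝ) ^ (-((3:ℝ)/4))) ^ e with hg
    set φ : ℕ → (ι → ℕ) := fun n p => n.factorization p with hφ
    have hgn : ∀ (p : ι) (e : ℕ), 0 ≤ g p e := by
      intro p e
      apply pow_nonneg (Real.rpow_nonneg (Nat.cast_nonneg _) _)
    have hwφ : ∀ n ∈ S, w n = ∏ p : ι, g p (φ n p) := by
      intro n hn
      have hcast : (n:ℝ) = ∏ p ∈ F, ((p:ℝ)) ^ (n.factorization p) := by
        conv_lhs => rw [← hfact n hn]
        push_cast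
        rfl
      have hnneg : ∀ p ∈ F, (0:ℝ) ≤ (p:ℝ) ^ (n.factorization p) :=
        fun p _ => pow_nonneg (Nat.cast_nonneg p) _
      rw [hw]
      simp only
      rw [hcast, ← Real.finset_prod_rpow F _ hnneg]
      rw [← Finset.prod_coe_sort F (fun p => ((p:ℝ) ^ (n.factorization p)) ^ (-((3:ℝ)/4)))]
      apply Finset.prod_congr rfl
      intro p _
      rw [hg, hφ]
      simp only
      rw [← Real.rpow_natCast ((p:ℕ):ℝ) (n.factorization p),
          ← Real.rpow_mul (Nat.cast_nonneg _), mul_comm,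
          Real.rpow_mul (Nat.cast_nonneg _), Real.rpow_natCast]
    have hinj : Set.InjOn φ S := by
      intro n1 h1 n2 h2 heq
      rw [← hfact n1 h1, ← hfact n2 h2]
      rw [← Finset.prod_attach F (fun p => p ^ n1.factorization p),
          ← Finset.prod_attach F (fun p => p ^ n2.factorization p)]
      apply Finset.prod_congr rfl
      intro p _
      rw [show n1.factorization ↑p = φ n1 p from rfl, heq]
    have himg : S.image φ ⊆ Fintype.piFinset t := by
      intro v hv
      rw [Finset.mem_image] at hv
      obtain ⟨n, hn, rfl⟩ := hv
      rw [Fintype.mem_piFinset]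
      intro p
      rw [htdef]
      simp only [Finset.mem_range]
      exact Nat.lt_succ_of_le (hexp n hn p p.2)
    calc ∑ n ∈ S, w n = ∑ n ∈ S, ∏ p : ι, g p (φ n p) :=
          Finset.sum_congr rfl hwφ
      _ = ∑ v ∈ S.image φ, ∏ p : ι, g p (v p) := by
          rw [Finset.sum_image (fun a ha b hb h => hinj ha hb h)]
      _ ≤ ∑ v ∈ Fintype.piFinset t, ∏ p : ι, g p (v p) := by
          apply Finset.sum_le_sum_of_subset_of_nonneg himg
          intro v _ _
          exact Finset.prod_nonneg (fun p _ => hgn p (v p))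
      _ = ∏ p : ι, ∑ e ∈ t p, g p e := (Finset.prod_univ_sum t g).symm
      _ ≤ ∏ p : ι, (1 - ((p:ℕ):ℝ) ^ (-((3:ℝ)/4)))⁻¹ := by
          apply Finset.prod_le_prod
          · intro p _
            exact Finset.sum_nonneg (fun e _ => hgn p e)
          · intro p _
            set r := (((p:ℕ)):ℝ) ^ (-((3:ℝ)/4)) with hr
            have hp2 : 2 ≤ (p:ℕ) :=
              (Nat.prime_of_mem_primesBelow
                (show (p:ℕ) ∈ Nat.primesBelow (T+1) from p.2)).two_le
            have hr0 : 0 ≤ r := Real.rpow_nonneg (Nat.cast_nonneg _) _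
            have hr1 : r < 1 := by
              apply Real.rpow_lt_one_of_one_lt_of_neg
              · exact_mod_cast hp2.trans_lt' one_lt_two
              · norm_num
            rw [htdef]
            simp only
            rw [geom_sum_eq (ne_of_lt hr1)]
            rw [show (r ^ (E+1) - 1) / (r - 1) = (1 - r ^ (E+1)) / (1 - r) by
              rw [← neg_div_neg_eq]; ring_nf]
            have h1r : 0 < 1 - r := by linarith
            rw [inv_eq_one_div]
            apply (div_le_div_iff_of_pos_right h1r).2
            have : 0 ≤ r ^ (E+1) := pow_nonneg hr0 _
            linarith
      _ = ∏ p ∈ F, (1 - (p:ℝ) ^ (-((3:ℝ)/4)))⁻¹ :=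
          Finset.prod_coe_sort F (fun p => (1 - (p:ℝ) ^ (-((3:ℝ)/4)))⁻¹)
  -- step 3
  have hrlt : ∀ p ∈ F, (p:ℝ) ^ (-((3:ℝ)/4)) < 1 := by
    intro p hp
    have hp2 : 2 ≤ p :=
      (Nat.prime_of_mem_primesBelow (show p ∈ Nat.primesBelow (T+1) from hp)).two_le
    apply Real.rpow_lt_one_of_one_lt_of_neg
    · exact_mod_cast hp2.trans_lt' one_lt_two
    · norm_num
  have step3 : ∏ p ∈ F, (1 - (p:ℝ) ^ (-((3:ℝ)/4)))⁻¹
      ≤ Real.exp (12 * (T:ℝ) ^ ((1:ℝ)/4)) := by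
    have hfac : ∀ p ∈ F, (1 - (p:ℝ) ^ (-((3:ℝ)/4)))⁻¹
        ≤ Real.exp (3 * ((p:ℝ) ^ (-((3:ℝ)/4)))) := by
      intro p hp
      have hp2 : 2 ≤ p :=
        (Nat.prime_of_mem_primesBelow (show p ∈ Nat.primesBelow (T+1) from hp)).two_le
      have hp2' : (2:ℝ) ≤ (p:ℝ) := by exact_mod_cast hp2
      have hr0 : 0 ≤ (p:ℝ) ^ (-((3:ℝ)/4)) := Real.rpow_nonneg (by positivity) _
      apply inv_one_sub_le_exp hr0
      have h1 : (p:ℝ) ^ (-((3:ℝ)/4)) ≤ (2:ℝ) ^ (-((3:ℝ)/4)) := by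
        rw [show (-((3:ℝ)/4)) = -((3:ℝ)/4) from rfl,
            Real.rpow_neg (by positivity : (0:ℝ) ≤ (p:ℝ)),
            Real.rpow_neg (by norm_num : (0:ℝ) ≤ (2:ℝ))]
        apply inv_anti₀ (Real.rpow_pos_of_pos two_pos _)
        exact Real.rpow_le_rpow (by norm_num) hp2' (by norm_num)
      have h2 : (2:ℝ) ^ (-((3:ℝ)/4)) ≤ 2/3 := by
        rw [Real.rpow_neg (by norm_num : (0:ℝ) ≤ (2:ℝ))]
        have h3 := two_rpow_ge
        have h4 : ((2:ℝ) ^ ((3:ℝ)/4))⁻¹ ≤ ((3:ℝ)/2)⁻¹ :=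
          inv_anti₀ (by norm_num) h3
        rw [show ((3:ℝ)/2)⁻¹ = 2/3 by norm_num] at h4
        exact h4
      linarith
    calc ∏ p ∈ F, (1 - (p:ℝ) ^ (-((3:ℝ)/4)))⁻¹
        ≤ ∏ p ∈ F, Real.exp (3 * ((p:ℝ) ^ (-((3:ℝ)/4)))) := by
          apply Finset.prod_le_prod _ hfac
          intro p hp
          have := hrlt p hp
          have h1r : 0 < 1 - (p:ℝ) ^ (-((3:ℝ)/4)) := by linarith
          positivity
      _ = Real.exp (∑ p ∈ F, 3 * ((p:ℝ) ^ (-((3:ℝ)/4)))) := (Real.exp_sum F _).symm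
      _ ≤ Real.exp (12 * (T:ℝ) ^ ((1:ℝ)/4)) := by
          apply Real.exp_le_exp.2
          have hsub : F ⊆ Finset.Icc 2 T := by
            intro p hp
            rw [Finset.mem_Icc]
            have hp2 : 2 ≤ p :=
              (Nat.prime_of_mem_primesBelow (show p ∈ Nat.primesBelow (T+1) from hp)).two_le
            have hpT : p < T + 1 :=
              Nat.lt_of_mem_primesBelow (show p ∈ Nat.primesBelow (T+1) from hp)
            omega
          calc ∑ p ∈ F, 3 * ((p:ℝ) ^ (-((3:ℝ)/4)))
              ≤ ∑ k ∈ Finset.Icc 2 T, 3 * ((k:ℝ) ^ (-((3:ℝ)/4))) := by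
                apply Finset.sum_le_sum_of_subset_of_nonneg hsub
                intro k _ _
                have : (0:ℝ) ≤ (k:ℝ) ^ (-((3:ℝ)/4)) := Real.rpow_nonneg (by positivity) _
                linarith
            _ = 3 * ∑ k ∈ Finset.Icc 2 T, (k:ℝ) ^ (-((3:ℝ)/4)) := by
                rw [Finset.mul_sum]
            _ ≤ 3 * (4 * (T:ℝ) ^ ((1:ℝ)/4)) := by
                apply mul_le_mul_of_nonneg_left (sum_rpow_le T) (by norm_num)
            _ = 12 * (T:ℝ) ^ ((1:ℝ)/4) := by ring
  calc (S.card : ℝ) ≤ (y:ℝ) ^ ((3:ℝ)/4) * ∑ n ∈ S, w n := step1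
    _ ≤ (y:ℝ) ^ ((3:ℝ)/4) * Real.exp (12 * (T:ℝ) ^ ((1:ℝ)/4)) := by
        apply mul_le_mul_of_nonneg_left (step2.trans step3)
          (Real.rpow_nonneg (by positivity) _)


noncomputable def aa (K : ℕ) : ℝ :=
  4/(K:ℝ)^2 + (2:ℝ) ^ ((3:ℝ)/4 - (K:ℝ)/4) * Real.exp (12 * Real.sqrt (K:ℝ))

lemma aa_nonneg (K : ℕ) : 0 ≤ aa K := by
  unfold aa
  have h1 : (0:ℝ) ≤ 4/(K:ℝ)^2 := by positivity
  have h2 : (0:ℝ) ≤ (2:ℝ) ^ ((3:ℝ)/4 - (K:ℝ)/4) * Real.exp (12 * Real.sqrt (K:ℝ)) := by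
    apply mul_nonneg (Real.rpow_nonneg (by norm_num) _) (Real.exp_nonneg _)
  linarith

/-- The combined counting bound on a dyadic block. -/
lemma count_bound (q : ℚ) (K : ℕ) (hK : 2 ≤ K) :
    (((Finset.Icc 1 (2^(K+1))).filter (P q)).card : ℝ)
      ≤ ((2^(K+1) : ℕ) : ℝ) * (2/(K:ℝ)^2)
        + ((2^(K+1) : ℕ) : ℝ) ^ ((3:ℝ)/4) * Real.exp (12 * Real.sqrt (K:ℝ)) := by
  classical
  set T := K^2 with hTdef
  set y := 2^(K+1) with hy
  have hT2 : 2 ≤ T := by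
    rw [hTdef]
    nlinarith
  have hT1 : 1 ≤ T := by omega
  -- the three pieces
  set A := (Finset.Icc 1 y).filter
      (fun n => P q n ∧ ∃ p, p.Prime ∧ T < p ∧ p ∣ n ∧ ¬ (p * p ∣ n)) with hA
  set B := (Finset.Icc 1 y).filter (fun n => ∃ p : ℕ, p.Prime ∧ T < p ∧ p * p ∣ n) with hB
  set C := (Finset.Icc 1 y).filter (fun n => ∀ p : ℕ, p.Prime → p ∣ n → p ≤ T) with hC
  have hsub : (Finset.Icc 1 y).filter (P q) ⊆ A ∪ (B ∪ C) := by
    intro n hn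
    rw [Finset.mem_filter] at hn
    obtain ⟨hmem, hPn⟩ := hn
    rw [Finset.mem_union, Finset.mem_union, hA, hB, hC]
    by_cases hbig : ∃ p : ℕ, p.Prime ∧ T < p ∧ p ∣ n
    · obtain ⟨p, hp, hTp, hpd⟩ := hbig
      by_cases hsq : p * p ∣ n
      · right; left
        rw [Finset.mem_filter]
        exact ⟨hmem, p, hp, hTp, hsq⟩
      · left
        rw [Finset.mem_filter]
        exact ⟨hmem, hPn, p, hp, hTp, hpd, hsq⟩
    · right; right
      rw [Finset.mem_filter]
      push_neg at hbig
      refine ⟨hmem, fun p hp hpd => ?_⟩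
      by_contra hcon
      exact absurd (hbig p hp (by omega)) (by simp [hpd])
  have hcards : (((Finset.Icc 1 y).filter (P q)).card : ℝ)
      ≤ (A.card : ℝ) + (B.card : ℝ) + (C.card : ℝ) := by
    have h1 : ((Finset.Icc 1 y).filter (P q)).card ≤ A.card + (B.card + C.card) := by
      calc ((Finset.Icc 1 y).filter (P q)).card ≤ (A ∪ (B ∪ C)).card :=
            Finset.card_le_card hsub
        _ ≤ A.card + (B ∪ C).card := Finset.card_union_le _ _
        _ ≤ A.card + (B.card + C.card) := by
            have := Finset.card_union_le B C
            omega
    have h2 : ((Finset.Icc 1 y).filter (P q)).card ≤ A.card + B.card + C.card := by omega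
    exact_mod_cast h2
  have hTpos : (0:ℝ) < (T:ℝ) := by exact_mod_cast hT1
  have hcA : (A.card : ℝ) ≤ (y:ℝ) / (T:ℝ) := by
    have h1 : A.card ≤ y / (T+1) := card_case1 q y T
    calc (A.card : ℝ) ≤ ((y / (T+1) : ℕ) : ℝ) := by exact_mod_cast h1
      _ ≤ (y:ℝ) / ((T+1 : ℕ):ℝ) := Nat.cast_div_le
      _ ≤ (y:ℝ) / (T:ℝ) := by
          apply div_le_div_of_nonneg_left (by positivity) hTpos
          push_cast
          linarith
  have hcB : (B.card : ℝ) ≤ (y:ℝ) / (T:ℝ) := card_case2 y T hT1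
  have hcC : (C.card : ℝ) ≤ (y:ℝ) ^ ((3:ℝ)/4) * Real.exp (12 * (T:ℝ) ^ ((1:ℝ)/4)) :=
    card_smooth y T hT2
  have hTval : ((T:ℕ):ℝ) = (K:ℝ)^2 := by
    rw [hTdef]
    push_cast
    ring
  have hTq : ((T:ℕ):ℝ) ^ ((1:ℝ)/4) = Real.sqrt (K:ℝ) := by
    rw [hTval, Real.sqrt_eq_rpow, ← Real.rpow_natCast (K:ℝ) 2,
        ← Real.rpow_mul (Nat.cast_nonneg K)]
    norm_num
  have hdiv : (y:ℝ) / (T:ℝ) = (y:ℝ) * (1/(K:ℝ)^2) := by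
    rw [hTval]
    ring
  calc (((Finset.Icc 1 y).filter (P q)).card : ℝ)
      ≤ (A.card : ℝ) + (B.card : ℝ) + (C.card : ℝ) := hcards
    _ ≤ (y:ℝ) / (T:ℝ) + (y:ℝ) / (T:ℝ) + (y:ℝ) ^ ((3:ℝ)/4) * Real.exp (12 * (T:ℝ) ^ ((1:ℝ)/4)) := by
        linarith
    _ = (y:ℝ) * (2/(K:ℝ)^2) + (y:ℝ) ^ ((3:ℝ)/4) * Real.exp (12 * Real.sqrt (K:ℝ)) := by
        rw [hdiv, hTq]
        ring

/-- The tail block bound in `ℝ≥0∞`. -/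
lemma block_sum (q : ℚ) (K : ℕ) (hK : 2 ≤ K) :
    ∑ n ∈ Finset.Ico (2^K) (2^(K+1)), (if P q n then (1 : ℝ≥0∞)/((n:ℕ) : ℝ≥0∞) else 0)
      ≤ ENNReal.ofReal (aa K) := by
  classical
  have h2K : (0:ℝ) < ((2^K : ℕ) : ℝ) := by positivity
  -- reduce to cardinality
  have step1 : ∑ n ∈ Finset.Ico (2^K) (2^(K+1)), (if P q n then (1 : ℝ≥0∞)/((n:ℕ) : ℝ≥0∞) else 0)
      ≤ (((Finset.Ico (2^K) (2^(K+1))).filter (P q)).card : ℝ≥0∞)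
        * (((2^K : ℕ) : ℝ≥0∞))⁻¹ := by
    rw [← Finset.sum_filter]
    calc ∑ n ∈ (Finset.Ico (2^K) (2^(K+1))).filter (P q), (1 : ℝ≥0∞)/((n:ℕ) : ℝ≥0∞)
        ≤ ∑ _n ∈ (Finset.Ico (2^K) (2^(K+1))).filter (P q), (((2^K : ℕ) : ℝ≥0∞))⁻¹ := by
          apply Finset.sum_le_sum
          intro n hn
          rw [Finset.mem_filter, Finset.mem_Ico] at hn
          rw [one_div]
          apply ENNReal.inv_le_inv'
          exact_mod_cast hn.1.1
      _ = (((Finset.Ico (2^K) (2^(K+1))).filter (P q)).card : ℝ≥0∞)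
            * (((2^K : ℕ) : ℝ≥0∞))⁻¹ := by
          rw [Finset.sum_const, nsmul_eq_mul]
  -- cardinality comparison
  have hsub : (Finset.Ico (2^K) (2^(K+1))).filter (P q)
      ⊆ (Finset.Icc 1 (2^(K+1))).filter (P q) := by
    apply Finset.filter_subset_filter
    intro n hn
    rw [Finset.mem_Ico] at hn
    rw [Finset.mem_Icc]
    have h1 : 1 ≤ 2^K := Nat.one_le_two_pow
    omega
  have hcard : (((Finset.Ico (2^K) (2^(K+1))).filter (P q)).card : ℝ)
      ≤ ((2^(K+1) : ℕ) : ℝ) * (2/(K:ℝ)^2)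
        + ((2^(K+1) : ℕ) : ℝ) ^ ((3:ℝ)/4) * Real.exp (12 * Real.sqrt (K:ℝ)) := by
    calc (((Finset.Ico (2^K) (2^(K+1))).filter (P q)).card : ℝ)
        ≤ (((Finset.Icc 1 (2^(K+1))).filter (P q)).card : ℝ) := by
          exact_mod_cast Finset.card_le_card hsub
      _ ≤ _ := count_bound q K hK
  -- real arithmetic
  have hreal : (((Finset.Ico (2^K) (2^(K+1))).filter (P q)).card : ℝ) * (((2^K : ℕ) : ℝ))⁻¹
      ≤ aa K := by
    have hmul := mul_le_mul_of_nonneg_right hcard (le_of_lt (inv_pos.2 h2K))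
    apply hmul.trans
    have hy2 : ((2^(K+1) : ℕ) : ℝ) = 2 * ((2^K : ℕ) : ℝ) := by
      push_cast
      ring
    have hterm1 : ((2^(K+1) : ℕ) : ℝ) * (2/(K:ℝ)^2) * (((2^K : ℕ) : ℝ))⁻¹ = 4/(K:ℝ)^2 := by
      rw [hy2]
      field_simp
      ring
    have hterm2 : ((2^(K+1) : ℕ) : ℝ) ^ ((3:ℝ)/4) * (((2^K : ℕ) : ℝ))⁻¹
        = (2:ℝ) ^ ((3:ℝ)/4 - (K:ℝ)/4) := by
      have hc1 : ((2^(K+1) : ℕ) : ℝ) = (2:ℝ) ^ (((K+1 : ℕ)):ℝ) := by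
        rw [Real.rpow_natCast]
        push_cast
        ring
      have hc2 : (((2^K : ℕ) : ℝ))⁻¹ = (2:ℝ) ^ (-((K:ℕ):ℝ)) := by
        rw [Real.rpow_neg (by norm_num : (0:ℝ) ≤ 2), Real.rpow_natCast]
        push_cast
        ring
      rw [hc1, hc2, ← Real.rpow_mul (by norm_num : (0:ℝ) ≤ 2),
          ← Real.rpow_add (by norm_num : (0:ℝ) < 2)]
      congr 1
      push_cast
      ring
    unfold aa
    calc (((2^(K+1) : ℕ) : ℝ) * (2/(K:ℝ)^2)
          + ((2^(K+1) : ℕ) : ℝ) ^ ((3:ℝ)/4) * Real.exp (12 * Real.sqrt (K:ℝ)))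
          * (((2^K : ℕ) : ℝ))⁻¹
        = ((2^(K+1) : ℕ) : ℝ) * (2/(K:ℝ)^2) * (((2^K : ℕ) : ℝ))⁻¹
          + ((2^(K+1) : ℕ) : ℝ) ^ ((3:ℝ)/4) * (((2^K : ℕ) : ℝ))⁻¹
            * Real.exp (12 * Real.sqrt (K:ℝ)) := by ring
      _ ≤ 4/(K:ℝ)^2 + (2:ℝ) ^ ((3:ℝ)/4 - (K:ℝ)/4) * Real.exp (12 * Real.sqrt (K:ℝ)) := by
          rw [hterm1, hterm2]
  -- assemble in ℝ≥0∞
  apply step1.trans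
  have hofr : (((Finset.Ico (2^K) (2^(K+1))).filter (P q)).card : ℝ≥0∞)
      * (((2^K : ℕ) : ℝ≥0∞))⁻¹
      = ENNReal.ofReal ((((Finset.Ico (2^K) (2^(K+1))).filter (P q)).card : ℝ)
          * (((2^K : ℕ) : ℝ))⁻¹) := by
    rw [ENNReal.ofReal_mul (by positivity), ENNReal.ofReal_inv_of_pos h2K]
    rw [ENNReal.ofReal_natCast, ENNReal.ofReal_natCast]
  rw [hofr]
  exact ENNReal.ofReal_le_ofReal hreal


lemma aa_second_le (K : ℕ) :
    (2:ℝ) ^ ((3:ℝ)/4 - (K:ℝ)/4) * Real.exp (12 * Real.sqrt (K:ℝ))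
      ≤ ((2:ℝ) ^ ((3:ℝ)/4) * Real.exp 576)
        * (((2:ℝ) ^ (-((1:ℝ)/4)) * Real.exp (1/16)) ^ K) := by
  have h2 : (0:ℝ) < 2 := by norm_num
  have hsplit : (2:ℝ) ^ ((3:ℝ)/4 - (K:ℝ)/4)
      = (2:ℝ) ^ ((3:ℝ)/4) * ((2:ℝ) ^ (-((1:ℝ)/4))) ^ K := by
    rw [show ((3:ℝ)/4 - (K:ℝ)/4) = (3:ℝ)/4 + (-((1:ℝ)/4)) * (K:ℝ) by ring,
        Real.rpow_add h2, Real.rpow_mul h2.le, Real.rpow_natCast]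
  have hexp : Real.exp (12 * Real.sqrt (K:ℝ)) ≤ Real.exp 576 * (Real.exp (1/16)) ^ K := by
    have hK0 : (0:ℝ) ≤ (K:ℝ) := Nat.cast_nonneg K
    have hsq : Real.sqrt (K:ℝ) ^ 2 = (K:ℝ) := Real.sq_sqrt hK0
    have hineq : 12 * Real.sqrt (K:ℝ) ≤ (K:ℝ)/16 + 576 := by
      nlinarith [sq_nonneg (Real.sqrt (K:ℝ)/4 - 24), Real.sqrt_nonneg (K:ℝ)]
    calc Real.exp (12 * Real.sqrt (K:ℝ)) ≤ Real.exp ((K:ℝ)/16 + 576) := Real.exp_le_exp.2 hineq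
      _ = Real.exp 576 * (Real.exp (1/16)) ^ K := by
          rw [Real.exp_add, ← Real.exp_nat_mul]
          ring_nf
  calc (2:ℝ) ^ ((3:ℝ)/4 - (K:ℝ)/4) * Real.exp (12 * Real.sqrt (K:ℝ))
      ≤ (2:ℝ) ^ ((3:ℝ)/4 - (K:ℝ)/4) * (Real.exp 576 * (Real.exp (1/16)) ^ K) := by
        apply mul_le_mul_of_nonneg_left hexp (Real.rpow_nonneg h2.le _)
    _ = ((2:ℝ) ^ ((3:ℝ)/4) * Real.exp 576)
        * (((2:ℝ) ^ (-((1:ℝ)/4)) * Real.exp (1/16)) ^ K) := by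
        rw [hsplit, mul_pow]
        ring

lemma rho_lt_one : (2:ℝ) ^ (-((1:ℝ)/4)) * Real.exp (1/16) < 1 := by
  have h2 : (0:ℝ) < 2 := by norm_num
  have hb : (0:ℝ) < (2:ℝ) ^ ((1:ℝ)/4) := Real.rpow_pos_of_pos h2 _
  have ha : (0:ℝ) < Real.exp (1/16) := Real.exp_pos _
  have hab : Real.exp (1/16) < (2:ℝ) ^ ((1:ℝ)/4) := by
    apply lt_of_pow_lt_pow_left₀ 16 hb.le
    have h1 : (Real.exp (1/16)) ^ (16:ℕ) = Real.exp 1 := by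
      rw [← Real.exp_nat_mul]
      norm_num
    have h2' : ((2:ℝ) ^ ((1:ℝ)/4)) ^ (16:ℕ) = 16 := by
      rw [← Real.rpow_natCast ((2:ℝ) ^ ((1:ℝ)/4)) 16, ← Real.rpow_mul h2.le,
          show ((1:ℝ)/4) * ((16:ℕ):ℝ) = ((4:ℕ):ℝ) by norm_num, Real.rpow_natCast]
      norm_num
    rw [h1, h2']
    calc Real.exp 1 < 2.7182818286 := Real.exp_one_lt_d9
      _ < 16 := by norm_num
  rw [Real.rpow_neg h2.le, inv_mul_lt_iff₀ hb, mul_one]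
  exact hab


lemma aa_summable : Summable aa := by
  have h1 : Summable (fun K : ℕ => 4/(K:ℝ)^2) := by
    have hs := (Real.summable_one_div_nat_pow (p := 2)).2 (by norm_num)
    have := hs.mul_left (4:ℝ)
    apply this.congr
    intro K
    ring
  have h2 : Summable (fun K : ℕ =>
      (2:ℝ) ^ ((3:ℝ)/4 - (K:ℝ)/4) * Real.exp (12 * Real.sqrt (K:ℝ))) := by
    have hρ0 : (0:ℝ) ≤ (2:ℝ) ^ (-((1:ℝ)/4)) * Real.exp (1/16) :=
      mul_nonneg (Real.rpow_nonneg (by norm_num) _) (Real.exp_nonneg _)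
    have hgeom : Summable (fun K : ℕ => ((2:ℝ) ^ (-((1:ℝ)/4)) * Real.exp (1/16)) ^ K) :=
      summable_geometric_of_lt_one hρ0 rho_lt_one
    have hC := hgeom.mul_left ((2:ℝ) ^ ((3:ℝ)/4) * Real.exp 576)
    apply Summable.of_nonneg_of_le _ (fun K => aa_second_le K) hC
    intro K
    exact mul_nonneg (Real.rpow_nonneg (by norm_num) _) (Real.exp_nonneg _)
  exact (h1.add h2).congr (fun K => rfl)

/-- The tail bound: if the class of `q` has no element `≤ 2^J` then its reciprocal
sum is bounded by the tail of `aa`. -/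
lemma tail_le (q : ℚ) (J : ℕ) (hJ : 2 ≤ J)
    (hempty : ∀ n : ℕ, P q n → ¬ n ≤ 2^J) :
    ∑' d : {d : ℕ // 0 < d ∧ (sigma1 d : ℚ) / d = q}, (1 : ℝ≥0∞) / (d.1 : ℝ≥0∞)
      ≤ ∑' j : ℕ, ENNReal.ofReal (aa (j + J)) := by
  classical
  set F : ℕ → ℝ≥0∞ := fun n => if P q n then (1 : ℝ≥0∞)/((n:ℕ) : ℝ≥0∞) else 0 with hF
  set G : ℕ → ℕ → ℝ≥0∞ := fun j n =>
    if n ∈ Finset.Ico (2^(j+J)) (2^(j+J+1)) then F n else 0 with hG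
  have h0 : ∑' d : {d : ℕ // 0 < d ∧ (sigma1 d : ℚ) / d = q}, (1 : ℝ≥0∞) / (d.1 : ℝ≥0∞)
      = ∑' n : ℕ, F n := by
    calc ∑' d : {d : ℕ // 0 < d ∧ (sigma1 d : ℚ) / d = q}, (1 : ℝ≥0∞) / (d.1 : ℝ≥0∞)
        = ∑' n : ℕ, Set.indicator {m : ℕ | 0 < m ∧ (sigma1 m : ℚ) / m = q}
            (fun k => (1 : ℝ≥0∞)/((k:ℕ) : ℝ≥0∞)) n :=
          tsum_subtype {m : ℕ | 0 < m ∧ (sigma1 m : ℚ) / m = q}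
            (fun k => (1 : ℝ≥0∞)/((k:ℕ) : ℝ≥0∞))
      _ = ∑' n : ℕ, F n := by
          apply tsum_congr
          intro n
          rw [Set.indicator_apply, hF]
          rfl
  rw [h0]
  have hpt : ∀ n : ℕ, F n ≤ ∑' j : ℕ, G j n := by
    intro n
    by_cases hP : P q n
    · have hn1 : 0 < n := hP.1
      have hbig : 2^J < n := by
        have := hempty n hP
        omega
      set K := Nat.log 2 n with hK
      have hKJ : J ≤ K := Nat.le_log_of_pow_le (by norm_num) hbig.le
      have hmem : n ∈ Finset.Ico (2^K) (2^(K+1)) := by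
        rw [Finset.mem_Ico]
        exact ⟨Nat.pow_log_le_self 2 hn1.ne', Nat.lt_pow_succ_log_self (by norm_num) n⟩
      have hidx : (K - J) + J = K := Nat.sub_add_cancel hKJ
      have hval : G (K - J) n = F n := by
        rw [hG]
        simp only [hidx]
        rw [if_pos hmem]
      calc F n = G (K - J) n := hval.symm
        _ ≤ ∑' j : ℕ, G j n := ENNReal.le_tsum _
    · rw [hF]
      simp only [if_neg hP]
      exact zero_le
  calc ∑' n : ℕ, F n ≤ ∑' n : ℕ, ∑' j : ℕ, G j n := ENNReal.tsum_le_tsum hpt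
    _ = ∑' j : ℕ, ∑' n : ℕ, G j n := ENNReal.tsum_comm
    _ ≤ ∑' j : ℕ, ENNReal.ofReal (aa (j + J)) := by
        apply ENNReal.tsum_le_tsum
        intro j
        have hsum : ∑' n : ℕ, G j n = ∑ n ∈ Finset.Ico (2^(j+J)) (2^(j+J+1)), F n := by
          rw [tsum_eq_sum (s := Finset.Ico (2^(j+J)) (2^(j+J+1)))
            (by intro n hn; rw [hG]; simp only [if_neg hn])]
          apply Finset.sum_congr rfl
          intro n hn
          rw [hG]
          simp only [if_pos hn]
        rw [hsum]
        have := block_sum q (j + J) (le_trans hJ (Nat.le_add_left J j))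
        exact this

theorem main (ε : ℝ) (hε : 0 < ε) :
    {q : ℚ | 0 < q ∧ ENNReal.ofReal ε ≤
      ∑' d : {d : ℕ // 0 < d ∧ (sigma1 d : ℚ) / d = q}, (1 : ℝ≥0∞) / (d.1 : ℝ≥0∞)}.Finite := by
  classical
  have hsum := aa_summable
  have htail := tendsto_sum_nat_add aa
  have hev : ∀ᶠ i in Filter.atTop, ∑' k : ℕ, aa (k + i) < ε :=
    htail.eventually (gt_mem_nhds hε)
  obtain ⟨J, hJ⟩ := ((Filter.eventually_ge_atTop 2).and hev).exists
  obtain ⟨hJ2, hJtail⟩ := hJ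
  apply Set.Finite.subset
    (Set.Finite.image (fun n : ℕ => (sigma1 n : ℚ)/(n:ℚ)) (Set.finite_Icc 1 (2^J)))
  intro q hq
  obtain ⟨hq0, hqε⟩ := hq
  by_contra hnot
  have hempty : ∀ n : ℕ, P q n → ¬ n ≤ 2^J := by
    intro n hPn hle
    apply hnot
    exact ⟨n, Set.mem_Icc.2 ⟨hPn.1, hle⟩, hPn.2⟩
  have hb := tail_le q J hJ2 hempty
  have hsum' : Summable (fun j : ℕ => aa (j + J)) := (summable_nat_add_iff J).2 hsum
  have heq : ∑' j : ℕ, ENNReal.ofReal (aa (j + J))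
      = ENNReal.ofReal (∑' j : ℕ, aa (j + J)) :=
    (ENNReal.ofReal_tsum_of_nonneg (fun j => aa_nonneg _) hsum').symm
  have hlt : ∑' j : ℕ, ENNReal.ofReal (aa (j + J)) < ENNReal.ofReal ε := by
    rw [heq]
    exact (ENNReal.ofReal_lt_ofReal_iff hε).2 hJtail
  exact absurd hqε (not_le.2 (lt_of_le_of_lt hb hlt))

end Stmt17

theorem stmt17 (ε : ℝ) (hε : 0 < ε) :
    {q : ℚ | 0 < q ∧ ENNReal.ofReal ε ≤
      ∑' d : {d : ℕ // 0 < d ∧ (sigma1 d : ℚ) / d = q}, (1 : ℝ≥0∞) / (d.1 : ℝ≥0∞)}.Finite := by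
  exact Stmt17.main ε hε
end

section
/- For every positive rational number q, one has ∑_{d : ψ(d)/d = q} 1/d ≤ 1, where the sum ranges over all natural numbers d ≥ 1 with ψ(d)/d = q and ψ is the Dedekind totient function. -/
open scoped BigOperators ENNReal


noncomputable def fS (S : Finset ℕ) : ℚ := ∏ p ∈ S, ((p : ℚ) + 1) / p

lemma fS_natEq {S T : Finset ℕ} (hS : ∀ p ∈ S, p.Prime) (hT : ∀ p ∈ T, p.Prime)
    (h : fS S = fS T) :
    (∏ p ∈ S, (p + 1)) * ∏ p ∈ T, p = (∏ p ∈ T, (p + 1)) * ∏ p ∈ S, p := by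
  have hS0 : (∏ p ∈ S, (p : ℚ)) ≠ 0 := by
    apply Finset.prod_ne_zero_iff.2
    intro p hp
    exact_mod_cast (hS p hp).pos.ne'
  have hT0 : (∏ p ∈ T, (p : ℚ)) ≠ 0 := by
    apply Finset.prod_ne_zero_iff.2
    intro p hp
    exact_mod_cast (hT p hp).pos.ne'
  unfold fS at h
  rw [Finset.prod_div_distrib, Finset.prod_div_distrib, div_eq_div_iff hS0 hT0] at h
  have : ((∏ p ∈ S, (p + 1)) * ∏ p ∈ T, p : ℚ) = ((∏ p ∈ T, (p + 1)) * ∏ p ∈ S, p : ℚ) := by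
    push_cast
    exact h
  exact_mod_cast this

lemma mem_iff_mem {S T : Finset ℕ} (hS : ∀ p ∈ S, p.Prime) (hT : ∀ p ∈ T, p.Prime)
    {m : ℕ} (hm : m.Prime) (hm5 : 5 ≤ m)
    (hmaxS : ∀ p ∈ S, p ≤ m) (hmaxT : ∀ p ∈ T, p ≤ m)
    (h : fS S = fS T) : (m ∈ S ↔ m ∈ T) := by
  have hnat := fS_natEq hS hT h
  -- factorization of (p+1) at m is 0
  have hsucc : ∀ (U : Finset ℕ), (∀ p ∈ U, p.Prime) → (∀ p ∈ U, p ≤ m) →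
      (∏ p ∈ U, (p + 1)).factorization m = 0 := by
    intro U hU hUm
    rw [Nat.factorization_prod (fun p hp => Nat.succ_ne_zero p)]
    rw [Finsupp.finset_sum_apply]
    apply Finset.sum_eq_zero
    intro p hp
    apply Nat.factorization_eq_zero_of_not_dvd
    intro hdvd
    have h1 : p + 1 ≤ m + 1 := by have := hUm p hp; omega
    have h2 : m ≤ p + 1 := Nat.le_of_dvd (Nat.succ_pos p) hdvd
    have h3 : p + 1 = m := by
      rcases (by omega : p + 1 = m ∨ p + 1 = m + 1) with h3 | h3
      · exact h3
      · exfalso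
        have hdvd' : m ∣ m + 1 := by rwa [Nat.succ_eq_add_one, h3] at hdvd
        have := (Nat.dvd_add_right (dvd_refl m)).1 hdvd'
        have := Nat.le_of_dvd one_pos this
        omega
    have hodd : Odd m := hm.odd_of_ne_two (by omega)
    have hpeven : Even p := by
      rw [← h3] at hodd
      rw [Nat.odd_iff] at hodd
      rw [Nat.even_iff]
      omega
    have : p = 2 := ((hU p hp).even_iff).1 hpeven
    omega
  have hprime : ∀ (U : Finset ℕ), (∀ p ∈ U, p.Prime) →
      (∏ p ∈ U, p).factorization m = (if m ∈ U then 1 else 0) := by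
    intro U hU
    rw [Nat.factorization_prod (fun p hp => (hU p hp).pos.ne')]
    rw [Finsupp.finset_sum_apply]
    rw [Finset.sum_congr rfl (fun p hp => by
      rw [(hU p hp).factorization, Finsupp.single_apply])]
    simp [Finset.sum_ite_eq]
  have hL0 : (∏ p ∈ S, (p+1)) ≠ 0 := Finset.prod_ne_zero_iff.2 fun p _ => Nat.succ_ne_zero p
  have hT0 : (∏ p ∈ T, p) ≠ 0 := Finset.prod_ne_zero_iff.2 fun p hp => (hT p hp).pos.ne'
  have hL0' : (∏ p ∈ T, (p+1)) ≠ 0 := Finset.prod_ne_zero_iff.2 fun p _ => Nat.succ_ne_zero p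
  have hS0 : (∏ p ∈ S, p) ≠ 0 := Finset.prod_ne_zero_iff.2 fun p hp => (hS p hp).pos.ne'
  have hfac := congrArg (fun n => n.factorization m) hnat
  simp only [Nat.factorization_mul hL0 hT0, Nat.factorization_mul hL0' hS0,
    Finsupp.add_apply] at hfac
  rw [hsucc S hS hmaxS, hsucc T hT hmaxT, hprime S hS, hprime T hT] at hfac
  simp only [zero_add] at hfac
  by_cases h1 : m ∈ S <;> by_cases h2 : m ∈ T <;> simp [h1, h2] at hfac ⊢

lemma fS_subset23 {S : Finset ℕ} (hS : ∀ p ∈ S, p.Prime) (hb : ∀ p ∈ S, p ≤ 4) :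
    S ⊆ ({2, 3} : Finset ℕ) := by
  intro p hp
  have h1 := (hS p hp).two_le
  have h2 := hb p hp
  have := hS p hp
  interval_cases p
  · simp
  · simp
  · exact absurd this (by norm_num)

lemma fS_inj_aux : ∀ (n : ℕ) (S T : Finset ℕ), (∀ p ∈ S, p.Prime) → (∀ p ∈ T, p.Prime) →
    S.card + T.card ≤ n → fS S = fS T → S = T := by
  intro n
  induction n with
  | zero =>
    intro S T _ _ hcard _
    have : S = ∅ := Finset.card_eq_zero.1 (by omega)
    have : T = ∅ := Finset.card_eq_zero.1 (by omega)
    simp_all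
  | succ n ih =>
    intro S T hS hT hcard h
    by_cases hne : (S ∪ T) = ∅
    · rw [Finset.union_eq_empty] at hne
      rw [hne.1, hne.2]
    · have hne' : (S ∪ T).Nonempty := Finset.nonempty_of_ne_empty hne
      set m := (S ∪ T).max' hne' with hm_def
      have hm_mem : m ∈ S ∪ T := (S ∪ T).max'_mem hne'
      have hmax : ∀ p ∈ S ∪ T, p ≤ m := fun p hp => (S ∪ T).le_max' p hp
      have hm_prime : m.Prime := by
        rcases Finset.mem_union.1 hm_mem with h' | h'
        · exact hS m h'
        · exact hT m h'
      by_cases hm5 : 5 ≤ m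
      · have hiff := mem_iff_mem hS hT hm_prime hm5
          (fun p hp => hmax p (Finset.mem_union_left _ hp))
          (fun p hp => hmax p (Finset.mem_union_right _ hp)) h
        have hmS : m ∈ S ∧ m ∈ T := by
          rcases Finset.mem_union.1 hm_mem with h' | h'
          · exact ⟨h', hiff.1 h'⟩
          · exact ⟨hiff.2 h', h'⟩
        have hfrac : ((m : ℚ) + 1) / m ≠ 0 := by
          apply div_ne_zero <;> [positivity; exact_mod_cast hm_prime.pos.ne']
        have hSe : fS S = (((m : ℚ) + 1) / m) * fS (S.erase m) :=
          (Finset.mul_prod_erase S _ hmS.1).symm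
        have hTe : fS T = (((m : ℚ) + 1) / m) * fS (T.erase m) :=
          (Finset.mul_prod_erase T _ hmS.2).symm
        have h' : fS (S.erase m) = fS (T.erase m) := by
          apply mul_left_cancel₀ hfrac
          rw [← hSe, ← hTe, h]
        have hcard' : (S.erase m).card + (T.erase m).card ≤ n := by
          rw [Finset.card_erase_of_mem hmS.1, Finset.card_erase_of_mem hmS.2]
          have h1 : 1 ≤ S.card := Finset.card_pos.2 ⟨m, hmS.1⟩
          have h2 : 1 ≤ T.card := Finset.card_pos.2 ⟨m, hmS.2⟩
          omega
        have heq := ih (S.erase m) (T.erase m)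
          (fun p hp => hS p (Finset.mem_of_mem_erase hp))
          (fun p hp => hT p (Finset.mem_of_mem_erase hp)) hcard' h'
        ext a
        by_cases ha : a = m
        · subst ha; simp [hmS.1, hmS.2]
        · constructor <;> intro haa
          · have : a ∈ T.erase m := heq ▸ Finset.mem_erase.2 ⟨ha, haa⟩
            exact Finset.mem_of_mem_erase this
          · have : a ∈ S.erase m := heq ▸ Finset.mem_erase.2 ⟨ha, haa⟩
            exact Finset.mem_of_mem_erase this
      · have hsubS : S ⊆ ({2, 3} : Finset ℕ) :=
          fS_subset23 hS (fun p hp => le_trans (hmax p (Finset.mem_union_left _ hp)) (by omega))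
        have hsubT : T ⊆ ({2, 3} : Finset ℕ) :=
          fS_subset23 hT (fun p hp => le_trans (hmax p (Finset.mem_union_right _ hp)) (by omega))
        have hSp : S ∈ ({2, 3} : Finset ℕ).powerset := Finset.mem_powerset.2 hsubS
        have hTp : T ∈ ({2, 3} : Finset ℕ).powerset := Finset.mem_powerset.2 hsubT
        fin_cases hSp <;> fin_cases hTp <;>
          first
          | rfl
          | (exfalso; revert h; unfold fS; norm_num)

lemma geom_bound {p : ℕ} (hp : 2 ≤ p) :
    ∑' k : ℕ, (1 : ℝ≥0∞) / (p : ℝ≥0∞) ^ (k + 1) ≤ 1 := by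
  have hle : ∀ k : ℕ, (1 : ℝ≥0∞) / (p : ℝ≥0∞) ^ (k + 1) ≤ ((2 : ℝ≥0∞)⁻¹) ^ (k + 1) := by
    intro k
    rw [one_div, ← ENNReal.inv_pow]
    apply ENNReal.inv_le_inv.2
    apply pow_le_pow_left₀ (by norm_num)
    exact_mod_cast hp
  calc ∑' k : ℕ, (1 : ℝ≥0∞) / (p : ℝ≥0∞) ^ (k + 1)
      ≤ ∑' k : ℕ, ((2 : ℝ≥0∞)⁻¹) ^ (k + 1) := ENNReal.tsum_le_tsum hle
    _ = 2⁻¹ * ∑' k : ℕ, ((2 : ℝ≥0∞)⁻¹) ^ k := by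
        simp_rw [pow_succ, mul_comm]
        exact ENNReal.tsum_mul_left
    _ = 2⁻¹ * (1 - 2⁻¹)⁻¹ := by rw [ENNReal.tsum_geometric]
    _ = 1 := by
        rw [ENNReal.one_sub_inv_two, inv_inv]
        exact ENNReal.inv_mul_cancel (by norm_num) (by norm_num)

lemma sum_inv_radical : ∀ (S : Finset ℕ), (∀ p ∈ S, p.Prime) →
    ∑' d : {d : ℕ // d.primeFactors = S ∧ 0 < d}, (1 : ℝ≥0∞) / (d.1 : ℝ≥0∞) ≤ 1 := by
  intro S
  induction S using Finset.induction_on with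
  | empty =>
    intro _
    have hval : ∀ x : {d : ℕ // d.primeFactors = ∅ ∧ 0 < d}, x.1 = 1 := by
      rintro ⟨d, hd, hdpos⟩
      show d = 1
      rcases Nat.primeFactors_eq_empty.1 hd with h | h <;> omega
    rcases isEmpty_or_nonempty {d : ℕ // d.primeFactors = ∅ ∧ 0 < d} with he | hne
    · rw [tsum_empty]; exact zero_le_one
    · obtain ⟨x⟩ := hne
      have huniq : ∀ y : {d : ℕ // d.primeFactors = ∅ ∧ 0 < d}, y = x :=
        fun y => Subtype.ext (by rw [hval y, hval x])
      rw [tsum_eq_single x (fun y hy => absurd (huniq y) hy)]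
      rw [hval x]
      norm_num
  | @insert p S hpS ih =>
    intro hins
    have hp : p.Prime := hins p (Finset.mem_insert_self p S)
    have hSp : ∀ q ∈ S, q.Prime := fun q hq => hins q (Finset.mem_insert_of_mem hq)
    -- facts about elements
    have hv : ∀ d : {d : ℕ // d.primeFactors = insert p S ∧ 0 < d},
        0 < d.1.factorization p := by
      rintro ⟨d, hd, hdpos⟩
      have : p ∈ d.primeFactors := hd ▸ Finset.mem_insert_self p S
      show 0 < d.factorization p
      exact Nat.pos_of_ne_zero (Finsupp.mem_support_iff.1 (by rwa [Nat.support_factorization]))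
    have hcompl : ∀ d : {d : ℕ // d.primeFactors = insert p S ∧ 0 < d},
        (ordCompl[p] d.1).primeFactors = S ∧ 0 < ordCompl[p] d.1 := by
      rintro ⟨d, hd, hdpos⟩
      constructor
      · show (ordCompl[p] d).primeFactors = S
        rw [← Nat.support_factorization, Nat.factorization_ordCompl d p,
          Finsupp.support_erase, Nat.support_factorization, hd, Finset.erase_insert hpS]
      · exact Nat.ordCompl_pos p hdpos.ne'

    set i : {d : ℕ // d.primeFactors = insert p S ∧ 0 < d} →
        ℕ × {d : ℕ // d.primeFactors = S ∧ 0 < d} :=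
      fun d => (d.1.factorization p - 1, ⟨ordCompl[p] d.1, hcompl d⟩) with hi_def
    have hinj : Function.Injective i := by
      rintro d₁ d₂ h
      have h1 : d₁.1.factorization p - 1 = d₂.1.factorization p - 1 := congrArg Prod.fst h
      have h2 : ordCompl[p] d₁.1 = ordCompl[p] d₂.1 :=
        congrArg Subtype.val (congrArg Prod.snd h)
      have hv1 := hv d₁
      have hv2 := hv d₂
      have hveq : d₁.1.factorization p = d₂.1.factorization p := by omega
      have e1 := Nat.ordProj_mul_ordCompl_eq_self d₁.1 p
      have e2 := Nat.ordProj_mul_ordCompl_eq_self d₂.1 p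
      have key : (p ^ (d₁.1.factorization p)) * (ordCompl[p] d₁.1) =
          (p ^ (d₂.1.factorization p)) * (ordCompl[p] d₂.1) := by rw [h2, hveq]
      rw [e1, e2] at key
      exact Subtype.ext key
    set g : ℕ × {d : ℕ // d.primeFactors = S ∧ 0 < d} → ℝ≥0∞ :=
      fun x => ((1 : ℝ≥0∞) / (p : ℝ≥0∞) ^ (x.1 + 1)) * ((1 : ℝ≥0∞) / (x.2.1 : ℝ≥0∞)) with hg_def
    have hval : ∀ d : {d : ℕ // d.primeFactors = insert p S ∧ 0 < d},
        (1 : ℝ≥0∞) / (d.1 : ℝ≥0∞) ≤ g (i d) := by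
      intro d
      have hd_eq : d.1 = p ^ (d.1.factorization p) * ordCompl[p] d.1 :=
        (Nat.ordProj_mul_ordCompl_eq_self d.1 p).symm
      have hvd := hv d
      apply le_of_eq
      have hcast : (d.1 : ℝ≥0∞) =
          (p : ℝ≥0∞) ^ (d.1.factorization p) * ((ordCompl[p] d.1 : ℕ) : ℝ≥0∞) := by
        conv_lhs => rw [hd_eq]
        push_cast
        ring
      simp only [hg_def, hi_def]
      rw [Nat.sub_add_cancel hvd, hcast, one_div, one_div, one_div,
        ENNReal.mul_inv
          (Or.inl (pow_ne_zero _ (by exact_mod_cast hp.pos.ne')))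
          (Or.inl (ENNReal.pow_ne_top (ENNReal.natCast_ne_top p)))]
    calc ∑' d : {d : ℕ // d.primeFactors = insert p S ∧ 0 < d}, (1 : ℝ≥0∞) / (d.1 : ℝ≥0∞)
        ≤ ∑' x, g x := Summable.tsum_le_tsum_of_inj i hinj (fun _ _ => zero_le) hval
          ENNReal.summable ENNReal.summable
      _ = (∑' k : ℕ, (1 : ℝ≥0∞) / (p : ℝ≥0∞) ^ (k + 1)) *
          (∑' d : {d : ℕ // d.primeFactors = S ∧ 0 < d}, (1 : ℝ≥0∞) / (d.1 : ℝ≥0∞)) := by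
          rw [ENNReal.tsum_prod']
          simp_rw [hg_def, ENNReal.tsum_mul_left]
          rw [ENNReal.tsum_mul_right]
      _ ≤ 1 * 1 := mul_le_mul' (geom_bound hp.two_le) (ih hSp)
      _ = 1 := one_mul 1

/-- The Dedekind totient function `ψ(n) = n · ∏_{p ∣ n} (p+1)/p`, valued in `ℚ`
(it is in fact a natural number). -/
def dedekindPsi (n : ℕ) : ℚ := n * ∏ p ∈ n.primeFactors, ((p : ℚ) + 1) / p

theorem stmt19 (q : ℚ) (hq : 0 < q) :
    ∑' d : {d : ℕ // 0 < d ∧ dedekindPsi d / d = q}, (1 : ℝ≥0∞) / (d.1 : ℝ≥0∞) ≤ 1 := by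
  rcases isEmpty_or_nonempty {d : ℕ // 0 < d ∧ dedekindPsi d / d = q} with he | hne
  · rw [tsum_empty]
    exact zero_le_one
  · obtain ⟨⟨d₀, hd₀pos, hd₀q⟩⟩ := hne
    have hratio : ∀ d : ℕ, 0 < d → dedekindPsi d / d = fS d.primeFactors := by
      intro d hd
      unfold dedekindPsi fS
      exact mul_div_cancel_left₀ _ (by exact_mod_cast hd.ne')
    have key : ∀ d : ℕ, 0 < d → dedekindPsi d / d = q → d.primeFactors = d₀.primeFactors := by
      intro d hd hq'
      apply fS_inj_aux (d.primeFactors.card + d₀.primeFactors.card) _ _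
        (fun p hp => Nat.prime_of_mem_primeFactors hp)
        (fun p hp => Nat.prime_of_mem_primeFactors hp) le_rfl
      rw [← hratio d hd, ← hratio d₀ hd₀pos, hq', hd₀q]
    calc ∑' d : {d : ℕ // 0 < d ∧ dedekindPsi d / d = q}, (1 : ℝ≥0∞) / (d.1 : ℝ≥0∞)
        ≤ ∑' d : {d : ℕ // d.primeFactors = d₀.primeFactors ∧ 0 < d},
            (1 : ℝ≥0∞) / (d.1 : ℝ≥0∞) := by
          apply Summable.tsum_le_tsum_of_inj
            (fun d : {d : ℕ // 0 < d ∧ dedekindPsi d / d = q} =>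
              (⟨d.1, key d.1 d.2.1 d.2.2, d.2.1⟩ :
                {d : ℕ // d.primeFactors = d₀.primeFactors ∧ 0 < d}))
            (fun a b h => by
              apply Subtype.ext
              have h' := Subtype.ext_iff.mp h
              exact h')
            (fun _ _ => zero_le) (fun _ => le_rfl) ENNReal.summable ENNReal.summable
      _ ≤ 1 := sum_inv_radical _ (fun p hp => Nat.prime_of_mem_primeFactors hp)
end
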